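/- arXiv:0906.4080 — 8 statements merged into one kernel-verified Lean document; each statement's English description precedes it below -/
import Mathlib

section
/- Let N=(G,r,p,q,I) be a network in which G is a finite connected simple graph, and let W be the infimum of W(f) over all flows f of intensity I from p to q in N. Then there is a unique flow i of intensity I with W(i) = W, and this flow i satisfies Kirchhoff's cycle law. -/
open scoped ENNReal Classical

/-- `f` is a flow of intensity `I` from `p` to `q` in the graph `G`:
it is antisymmetric, vanishes on non-adjacent pairs, and satisfies
Kirchhoff's node law at every vertex (the family of values on edges leaving a
vertex is summable, with sum `I` at `p`, `-I` at `q` and `0` elsewhere). -/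
def IsFlow {V : Type} (G : SimpleGraph V) (p q : V) (I : ℝ) (f : V → V → ℝ) : Prop :=
  (∀ x y, f x y = - f y x) ∧
  (∀ x y, ¬ G.Adj x y → f x y = 0) ∧
  ∀ x : V, HasSum (fun y : G.neighborSet x => f x y)
    (if x = p then I else if x = q then -I else 0)

/-- The energy `W(f) = ∑_{xy ∈ E} f(x,y)² r(xy)`; each edge of `G` corresponds to
exactly two ordered adjacent pairs contributing the same amount, whence the
division by 2. Valued in `ℝ≥0∞`. -/
noncomputable def energy {V : Type} (G : SimpleGraph V) (r : Sym2 V → ℝ)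
    (f : V → V → ℝ) : ℝ≥0∞ :=
  (∑' e : {e : V × V // G.Adj e.1 e.2},
      ENNReal.ofReal (f e.1.1 e.1.2 ^ 2 * r s(e.1.1, e.1.2))) / 2

/-- Kirchhoff's cycle law: around every (finite) cycle the potential
differences `f(x,y) · r(xy)` sum to zero. -/
def CycleLaw {V : Type} (G : SimpleGraph V) (r : Sym2 V → ℝ) (f : V → V → ℝ) : Prop :=
  ∀ (v : V) (c : G.Walk v v), c.IsCycle →
    (c.darts.map (fun d => f d.toProd.1 d.toProd.2 * r d.edge)).sum = 0

/-- `f` is cut-respecting: for every set `X` of vertices containing both `p` and `q`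
such that only finitely many edges join `X` to its complement, the net flow
across the cut is zero. -/
def CutRespecting {V : Type} (G : SimpleGraph V) (p q : V) (f : V → V → ℝ) : Prop :=
  ∀ X : Set V, p ∈ X → q ∈ X →
    ∀ hX : {e : V × V | e.1 ∈ X ∧ e.2 ∉ X ∧ G.Adj e.1 e.2}.Finite,
      ∑ e ∈ hX.toFinset, f e.1 e.2 = 0

/-!
Let `Q f = ∑ f(x,y)² r(xy)`, summed over ordered adjacent pairs (twice the energy), and let
`B` be its polar bilinear form. `Q` is positive definite on functions supported on edges, so its
sublevel sets within the closed affine space of flows are compact and `Q` attains its minimum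
at some flow `i`. Flows of intensity `0` are the directions of that affine space, hence the first
variation vanishes: `B i g = 0` for each of them. The unit flow around a cycle is such a `g`,
and `B i g` is twice the cycle sum, which gives the cycle law. For another minimizer `j`,
`g = j - i` gives `Q j = Q i + Q g`, so `Q g = 0` and `j = i`.
-/

namespace IsFlow

variable {V : Type} {G : SimpleGraph V} {p q : V} {I J : ℝ} {f g : V → V → ℝ}

lemma add (hf : IsFlow G p q I f) (hg : IsFlow G p q J g) : IsFlow G p q (I + J) (f + g) := by
  refine ⟨fun x y => by simp [hf.1 x y, hg.1 x y, add_comm],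
    fun x y h => by simp [hf.2.1 x y h, hg.2.1 x y h], fun x => ?_⟩
  have h := (hf.2.2 x).add (hg.2.2 x)
  split_ifs at h ⊢ <;> simpa [add_comm] using h

lemma smul (hf : IsFlow G p q I f) (c : ℝ) : IsFlow G p q (c * I) (c • f) := by
  refine ⟨fun x y => by simp [hf.1 x y], fun x y h => by simp [hf.2.1 x y h], fun x => ?_⟩
  have h := (hf.2.2 x).mul_left c
  split_ifs at h ⊢ <;> simpa using h

lemma sub (hf : IsFlow G p q I f) (hg : IsFlow G p q J g) : IsFlow G p q (I - J) (f - g) := by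
  simpa [sub_eq_add_neg] using hf.add (hg.smul (-1))

end IsFlow

section Energy

variable {V : Type} [Fintype V] {G : SimpleGraph V} {r : Sym2 V → ℝ}

lemma isFlow_iff {p q : V} {I : ℝ} {f : V → V → ℝ} :
    IsFlow G p q I f ↔ (∀ x y, f x y = - f y x) ∧ (∀ x y, ¬ G.Adj x y → f x y = 0) ∧
      ∀ x, ∑ y, f x y = if x = p then I else if x = q then -I else 0 := by
  refine and_congr_right fun _ => and_congr_right fun hsupp => forall_congr' fun x => ?_
  have hind : (G.neighborSet x).indicator (f x) = f x :=
    Set.indicator_eq_self.2 fun y hy => by_contra fun hxy => hy (hsupp x y hxy)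
  rw [← Function.comp_def, hasSum_subtype_iff_indicator, hind,
    Summable.of_finite.hasSum_iff, tsum_fintype]

lemma isClosed_setOf_isFlow (p q : V) (I : ℝ) : IsClosed {f : V → V → ℝ | IsFlow G p q I f} := by
  simp only [isFlow_iff, Set.ofPred_and, Set.ofPred_forall]
  refine .inter (isClosed_iInter fun x => isClosed_iInter fun y => isClosed_eq ?_ ?_) <|
    .inter (isClosed_iInter fun x => isClosed_iInter fun y => isClosed_iInter fun _ =>
      isClosed_eq ?_ ?_) (isClosed_iInter fun x => isClosed_eq ?_ ?_) <;> fun_prop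

noncomputable def adjPairs (G : SimpleGraph V) : Finset (V × V) :=
  Finset.univ.filter fun e => G.Adj e.1 e.2

lemma mem_adjPairs {e : V × V} : e ∈ adjPairs G ↔ G.Adj e.1 e.2 := by
  simp [adjPairs]

noncomputable def energyForm (G : SimpleGraph V) (r : Sym2 V → ℝ) :
    LinearMap.BilinForm ℝ (V → V → ℝ) :=
  LinearMap.mk₂ ℝ (fun f g => ∑ e ∈ adjPairs G, f e.1 e.2 * g e.1 e.2 * r s(e.1, e.2))
    (fun _ _ _ => by simp only [Pi.add_apply, add_mul, Finset.sum_add_distrib])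
    (fun _ _ _ => by simp only [Pi.smul_apply, smul_eq_mul, Finset.mul_sum, mul_assoc])
    (fun _ _ _ => by simp only [Pi.add_apply, mul_add, add_mul, Finset.sum_add_distrib])
    (fun _ _ _ => by
      simp only [Pi.smul_apply, smul_eq_mul, Finset.mul_sum]
      exact Finset.sum_congr rfl fun _ _ => by ring)

lemma energyForm_apply (f g : V → V → ℝ) :
    energyForm G r f g = ∑ e ∈ adjPairs G, f e.1 e.2 * g e.1 e.2 * r s(e.1, e.2) := rfl

lemma energyForm_comm (f g : V → V → ℝ) : energyForm G r f g = energyForm G r g f := by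
  simp only [energyForm_apply, mul_comm (f _ _)]

lemma energyForm_add_smul_self (f g : V → V → ℝ) (t : ℝ) :
    energyForm G r (f + t • g) (f + t • g)
      = energyForm G r f f + 2 * t * energyForm G r f g + t ^ 2 * energyForm G r g g := by
  simp only [map_add, map_smul, LinearMap.add_apply, LinearMap.smul_apply, smul_eq_mul,
    energyForm_comm g f]
  ring

lemma energyForm_summand_nonneg (hr : ∀ e ∈ G.edgeSet, 0 < r e) (f : V → V → ℝ) {e : V × V}
    (he : e ∈ adjPairs G) : 0 ≤ f e.1 e.2 * f e.1 e.2 * r s(e.1, e.2) :=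
  mul_nonneg (mul_self_nonneg _) (hr _ (mem_adjPairs.1 he)).le

lemma energyForm_self_nonneg (hr : ∀ e ∈ G.edgeSet, 0 < r e) (f : V → V → ℝ) :
    0 ≤ energyForm G r f f :=
  Finset.sum_nonneg fun _ => energyForm_summand_nonneg hr f

lemma sq_mul_le_energyForm_self (hr : ∀ e ∈ G.edgeSet, 0 < r e) (f : V → V → ℝ) {x y : V}
    (hxy : G.Adj x y) : f x y ^ 2 * r s(x, y) ≤ energyForm G r f f := by
  rw [sq]
  exact Finset.single_le_sum (fun _ => energyForm_summand_nonneg hr f)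
    (mem_adjPairs (e := (x, y)) |>.2 hxy)

lemma eq_zero_of_energyForm_self_nonpos (hr : ∀ e ∈ G.edgeSet, 0 < r e) {f : V → V → ℝ}
    (hf : ∀ x y, ¬ G.Adj x y → f x y = 0) (h : energyForm G r f f ≤ 0) : f = 0 := by
  funext x y
  by_cases hxy : G.Adj x y
  · have hle := (sq_mul_le_energyForm_self hr f hxy).trans h
    have hpos := hr _ (G.mem_edgeSet.2 hxy)
    simpa using pow_eq_zero_iff (n := 2) two_ne_zero |>.1
      (le_antisymm (nonpos_of_mul_nonpos_left hle hpos) (sq_nonneg _))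
  · exact hf x y hxy

lemma continuous_energyForm_self : Continuous fun f => energyForm G r f f := by
  simp only [energyForm_apply]
  fun_prop

lemma energy_eq_ofReal (hr : ∀ e ∈ G.edgeSet, 0 < r e) (f : V → V → ℝ) :
    energy G r f = ENNReal.ofReal (energyForm G r f f) / 2 := by
  rw [energy, tsum_fintype, ← Finset.sum_subtype (adjPairs G) (fun _ => mem_adjPairs)
      fun e => ENNReal.ofReal (f e.1 e.2 ^ 2 * r s(e.1, e.2)),
    energyForm_apply, ENNReal.ofReal_sum_of_nonneg (fun _ => energyForm_summand_nonneg hr f)]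
  simp only [sq]

lemma energy_le_energy_iff (hr : ∀ e ∈ G.edgeSet, 0 < r e) (f g : V → V → ℝ) :
    energy G r f ≤ energy G r g ↔ energyForm G r f f ≤ energyForm G r g g := by
  rw [energy_eq_ofReal hr, energy_eq_ofReal hr, div_eq_mul_inv, div_eq_mul_inv,
    ENNReal.mul_le_mul_iff_left (ENNReal.inv_ne_zero.2 ENNReal.ofNat_ne_top)
      (ENNReal.inv_ne_top.2 two_ne_zero),
    ENNReal.ofReal_le_ofReal_iff (energyForm_self_nonneg hr g)]

end Energy

section WalkFlow

variable {V : Type} {G : SimpleGraph V}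

noncomputable def unitFlow (a b : V) : V → V → ℝ :=
  fun x y => (if (x, y) = (a, b) then 1 else 0) - if (x, y) = (b, a) then 1 else 0

lemma unitFlow_antisymm (a b x y : V) : unitFlow a b x y = - unitFlow a b y x := by
  grind [unitFlow]

lemma unitFlow_eq_zero {a b x y : V} (hab : G.Adj a b) (hxy : ¬ G.Adj x y) :
    unitFlow a b x y = 0 := by
  have h₁ : (x, y) ≠ (a, b) := by rintro ⟨⟩; exact hxy hab
  have h₂ : (x, y) ≠ (b, a) := by rintro ⟨⟩; exact hxy hab.symm
  simp [unitFlow, h₁, h₂]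

noncomputable def walkFlow : {u v : V} → G.Walk u v → V → V → ℝ
  | _, _, .nil => 0
  | u, _, .cons (v := w) _ p => unitFlow u w + walkFlow p

lemma walkFlow_antisymm {u v : V} (w : G.Walk u v) (x y : V) :
    walkFlow w x y = - walkFlow w y x := by
  induction w with
  | nil => simp [walkFlow]
  | cons _ p ih => simp [walkFlow, ih, unitFlow_antisymm _ _ x y, add_comm]

lemma walkFlow_eq_zero {u v : V} (w : G.Walk u v) {x y : V} (hxy : ¬ G.Adj x y) :
    walkFlow w x y = 0 := by
  induction w with
  | nil => rfl
  | cons h p ih => simp [walkFlow, ih, unitFlow_eq_zero h hxy]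

end WalkFlow

section FiniteWalkFlow

variable {V : Type} [Fintype V] {G : SimpleGraph V} {r : Sym2 V → ℝ}

lemma sum_unitFlow (a b x : V) :
    ∑ y, unitFlow a b x y = (if x = a then 1 else 0) - if x = b then 1 else 0 := by
  simp [unitFlow, Finset.sum_sub_distrib, Prod.ext_iff, ite_and]

lemma energyForm_unitFlow {i : V → V → ℝ} (hi : ∀ x y, i x y = - i y x) {a b : V}
    (hab : G.Adj a b) : energyForm G r i (unitFlow a b) = 2 * (i a b * r s(a, b)) := by
  have hab' : (a, b) ∈ adjPairs G := mem_adjPairs.2 hab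
  have hba : (b, a) ∈ adjPairs G := mem_adjPairs.2 hab.symm
  simp only [energyForm_apply, unitFlow, Prod.mk.eta, mul_sub, mul_ite, mul_one, mul_zero,
    sub_mul, ite_mul, zero_mul, Finset.sum_sub_distrib, Finset.sum_ite_eq', hab', hba,
    if_true]
  rw [hi b a, Sym2.eq_swap]
  ring

lemma sum_walkFlow {u v : V} (w : G.Walk u v) (x : V) :
    ∑ y, walkFlow w x y = (if x = u then 1 else 0) - if x = v then 1 else 0 := by
  induction w with
  | nil => simp [walkFlow]
  | cons _ p ih =>
    simp only [walkFlow, Pi.add_apply, Finset.sum_add_distrib, sum_unitFlow, ih]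
    ring

lemma energyForm_walkFlow {i : V → V → ℝ} (hi : ∀ x y, i x y = - i y x) {u v : V}
    (w : G.Walk u v) :
    energyForm G r i (walkFlow w)
      = 2 * (w.darts.map fun d => i d.toProd.1 d.toProd.2 * r d.edge).sum := by
  induction w with
  | nil => simp [walkFlow]
  | cons h p ih =>
    simp only [walkFlow, map_add, energyForm_unitFlow hi h, ih, SimpleGraph.Walk.darts_cons,
      List.map_cons, List.sum_cons, SimpleGraph.Dart.edge]
    ring

lemma isFlow_walkFlow {p q : V} (w : G.Walk p q) (hpq : p ≠ q) : IsFlow G p q 1 (walkFlow w) :=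
  isFlow_iff.2 ⟨walkFlow_antisymm w, fun _ _ => walkFlow_eq_zero w, fun x => by
    rw [sum_walkFlow]
    split_ifs <;> simp_all⟩

lemma isFlow_walkFlow_of_closed {v : V} (c : G.Walk v v) (p q : V) :
    IsFlow G p q 0 (walkFlow c) :=
  isFlow_iff.2 ⟨walkFlow_antisymm c, fun _ _ => walkFlow_eq_zero c, fun x => by
    rw [sum_walkFlow]
    split_ifs <;> simp⟩

end FiniteWalkFlow

section Minimizer

variable {V : Type} [Fintype V] {G : SimpleGraph V} {r : Sym2 V → ℝ} {p q : V} {I : ℝ}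

lemma isBounded_setOf_energyForm_self_le (hr : ∀ e ∈ G.edgeSet, 0 < r e) (c : ℝ) :
    Bornology.IsBounded
      {f : V → V → ℝ | (∀ x y, ¬ G.Adj x y → f x y = 0) ∧ energyForm G r f f ≤ c} := by
  set C := ∑ e : V × V, √(c / r s(e.1, e.2))
  have hC : 0 ≤ C := Finset.sum_nonneg fun _ _ => Real.sqrt_nonneg _
  refine isBounded_iff_forall_norm_le.2 ⟨C, fun f ⟨hf, hfc⟩ => ?_⟩
  refine (pi_norm_le_iff_of_nonneg hC).2 fun x => (pi_norm_le_iff_of_nonneg hC).2 fun y => ?_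
  by_cases hxy : G.Adj x y
  · have hsq : f x y ^ 2 ≤ c / r s(x, y) := (le_div_iff₀ (hr _ (G.mem_edgeSet.2 hxy))).2 <|
      (sq_mul_le_energyForm_self hr f hxy).trans hfc
    calc ‖f x y‖ ≤ √(c / r s(x, y)) := Real.abs_le_sqrt hsq
      _ ≤ C := Finset.single_le_sum (f := fun e : V × V => √(c / r s(e.1, e.2)))
          (fun _ _ => Real.sqrt_nonneg _) (Finset.mem_univ (x, y))
  · simpa [hf x y hxy] using hC

lemma exists_forall_isFlow_energyForm_self_le (hr : ∀ e ∈ G.edgeSet, 0 < r e)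
    (hflow : ∃ f, IsFlow G p q I f) :
    ∃ i, IsFlow G p q I i ∧ ∀ f, IsFlow G p q I f → energyForm G r i i ≤ energyForm G r f f := by
  obtain ⟨f₀, hf₀⟩ := hflow
  set K := {f | IsFlow G p q I f} ∩ {f | energyForm G r f f ≤ energyForm G r f₀ f₀}
  have hK : IsCompact K :=
    Metric.isCompact_of_isClosed_isBounded
      ((isClosed_setOf_isFlow p q I).inter
        (isClosed_le continuous_energyForm_self continuous_const))
      ((isBounded_setOf_energyForm_self_le hr (energyForm G r f₀ f₀)).subset
        fun f ⟨hf, hfc⟩ => ⟨hf.2.1, hfc⟩)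
  obtain ⟨i, ⟨hi, hi₀⟩, hmin⟩ := hK.exists_isMinOn ⟨f₀, hf₀, le_rfl (a := energyForm G r f₀ f₀)⟩
    continuous_energyForm_self.continuousOn
  refine ⟨i, hi, fun f hf => ?_⟩
  rcases le_total (energyForm G r f f) (energyForm G r f₀ f₀) with hf₀f | hff₀
  · exact hmin ⟨hf, hf₀f⟩
  · exact hi₀.trans hff₀

variable {i : V → V → ℝ} (hi : IsFlow G p q I i)
  (hmin : ∀ f, IsFlow G p q I f → energyForm G r i i ≤ energyForm G r f f)
include hi hmin

lemma energyForm_eq_zero_of_isFlow_zero {g : V → V → ℝ} (hg : IsFlow G p q 0 g) :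
    energyForm G r i g = 0 := by
  have hquad : ∀ t : ℝ, 0 ≤ energyForm G r g g * (t * t) + 2 * energyForm G r i g * t + 0 := by
    intro t
    have := hmin _ (by simpa using hi.add (hg.smul t))
    rw [energyForm_add_smul_self] at this
    linarith
  have := discrim_le_zero hquad
  rw [discrim] at this
  nlinarith [sq_nonneg (energyForm G r i g)]

lemma cycleLaw_of_forall_energyForm_self_le : CycleLaw G r i := by
  intro v c _
  have := energyForm_eq_zero_of_isFlow_zero hi hmin (isFlow_walkFlow_of_closed c p q)
  rw [energyForm_walkFlow hi.1] at this
  linarith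

lemma eq_of_energyForm_self_le (hr : ∀ e ∈ G.edgeSet, 0 < r e) {j : V → V → ℝ}
    (hj : IsFlow G p q I j) (hji : energyForm G r j j ≤ energyForm G r i i) : j = i := by
  have hg : IsFlow G p q 0 (j - i) := by simpa using hj.sub hi
  have hexp := energyForm_add_smul_self (G := G) (r := r) i (j - i) 1
  rw [one_smul, add_sub_cancel, energyForm_eq_zero_of_isFlow_zero hi hmin hg] at hexp
  have hzero := eq_zero_of_energyForm_self_nonpos hr hg.2.1 (by linarith)
  exact sub_eq_zero.1 hzero

end Minimizer

/-- In a finite connected network there is a unique flow of intensity `I`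
attaining the infimum of the energy over all such flows, and this flow
satisfies Kirchhoff's cycle law. -/
theorem unique_minimum_energy_flow_finite
    {V : Type} [Fintype V] (G : SimpleGraph V) (hconn : G.Connected)
    (r : Sym2 V → ℝ) (hr : ∀ e ∈ G.edgeSet, 0 < r e)
    (p q : V) (hpq : p ≠ q) (I : ℝ) :
    ∃ i : V → V → ℝ, IsFlow G p q I i ∧
      energy G r i = (⨅ f : {f : V → V → ℝ // IsFlow G p q I f}, energy G r f.1) ∧
      CycleLaw G r i ∧
      ∀ j : V → V → ℝ, IsFlow G p q I j →
        energy G r j = (⨅ f : {f : V → V → ℝ // IsFlow G p q I f}, energy G r f.1) →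
        j = i := by
  obtain ⟨w⟩ := hconn.preconnected p q
  obtain ⟨i, hi, hmin⟩ := exists_forall_isFlow_energyForm_self_le hr
    ⟨_, by simpa using (isFlow_walkFlow w hpq).smul I⟩
  have hinf : energy G r i = ⨅ f : {f : V → V → ℝ // IsFlow G p q I f}, energy G r f.1 :=
    le_antisymm (le_iInf fun f => (energy_le_energy_iff hr i f.1).2 (hmin f.1 f.2))
      (iInf_le (fun f : {f // IsFlow G p q I f} => energy G r f.1) ⟨i, hi⟩)
  refine ⟨i, hi, hinf, cycleLaw_of_forall_energyForm_self_le hi hmin, fun j hj hj_inf => ?_⟩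
  exact eq_of_energyForm_self_le hi hmin hr hj <|
    (energy_le_energy_iff hr j i).1 (hj_inf.trans hinf.symm).le
end

section
/- Let X be a Hausdorff topological space and let σ : [0,1] → X be a continuous map with σ(0) ≠ σ(1). Then there exist an injective continuous map τ : [0,1] → X and a strictly increasing function m : [0,1] → [0,1] such that τ(x) = σ(m(x)) for every x ∈ [0,1]; in particular τ(0) = σ(0) and τ(1) = σ(1). -/
/-!
Consider the closed sets `A ∋ 0, 1` such that `σ` takes equal values at the two ends of every
gap of `A`. Zorn's lemma gives a minimal one (for a chain, compactness of `[a, b]` turns a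
separation of `σ a` and `σ b` into a gap of one member of the chain with ends separated by `σ`).
Minimality forces the ends of a gap to be the only pairs of points of `A` with equal
`σ`-values, so the points of `A` in `(0, 1)` are not isolated in `A`. The closure of
`A ∩ (0, 1)` is then a nonempty perfect set; it carries an atomless probability measure which
charges every open set meeting it, and its distribution function `Q` is a continuous monotone
surjection of `[0, 1]` onto itself, constant exactly on the gaps of `A`. Take `m y = min Q⁻¹(y)`
and `τ = σ ∘ m`. As a lower adjoint of `Q`, `m` is left continuous, while `τ` also equals
`σ ∘ max Q⁻¹(·)`, which is right continuous; and `τ` is injective by minimality of `A`.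
-/

open Set Filter Topology MeasureTheory ProbabilityTheory Function
open scoped ENNReal

section ShortcutSets

variable {α X : Type*} [CompleteLinearOrder α] [TopologicalSpace α] {σ : α → X} {A : Set α}

theorem IsClosed.disjoint_Ioo_closure_inter_Ioo_iff (hA : IsClosed A) {s t : α} :
    Disjoint (Ioo s t) (closure (A ∩ Ioo ⊥ ⊤)) ↔ Disjoint (Ioo s t) A :=
  ⟨fun h => disjoint_left.2 fun _ hz hzA =>
    disjoint_left.1 h hz (subset_closure ⟨hzA, bot_le.trans_lt hz.1, hz.2.trans_le le_top⟩),
   fun h => h.mono_right (hA.closure_subset_iff.2 inter_subset_left)⟩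

/-- Following `σ` along `A` and jumping over the gaps of `A` gives a shortcut of `σ`. -/
structure IsShortcutSet (σ : α → X) (A : Set α) : Prop where
  isClosed : IsClosed A
  bot_mem : ⊥ ∈ A
  top_mem : ⊤ ∈ A
  apply_eq : ∀ ⦃a b⦄, a ∈ A → b ∈ A → a ≤ b → Disjoint (Ioo a b) A → σ a = σ b

theorem isShortcutSet_univ [DenselyOrdered α] (σ : α → X) : IsShortcutSet σ univ where
  isClosed := isClosed_univ
  bot_mem := mem_univ _
  top_mem := mem_univ _
  apply_eq a b _ _ hab hgap := by
    rw [disjoint_univ, Ioo_eq_empty_iff, not_lt] at hgap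
    rw [le_antisymm hab hgap]

theorem IsShortcutSet.nonempty_inter_Ioo (hA : IsShortcutSet σ A) (hne : σ ⊥ ≠ σ ⊤) :
    (A ∩ Ioo ⊥ ⊤).Nonempty := by
  rw [inter_comm, ← not_disjoint_iff_nonempty_inter]
  exact fun h => hne (hA.apply_eq hA.bot_mem hA.top_mem bot_le h)

variable [OrderTopology α]

theorem IsClosed.exists_gap_below (hA : IsClosed A) {a x : α} (ha : a ∈ A) (hax : a < x)
    (hx : x ∉ closure (A ∩ Iio x)) : ∃ c ∈ A, c < x ∧ Disjoint (Ioo c x) A := by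
  have hc : sSup (A ∩ Iio x) ∈ closure (A ∩ Iio x) := sSup_mem_closure ⟨a, ha, hax⟩
  refine ⟨_, hA.closure_subset (closure_mono inter_subset_left hc),
    (sSup_le fun z hz => hz.2.le).lt_of_ne fun h => hx (by rwa [h] at hc), ?_⟩
  exact disjoint_left.2 fun z hz hzA => (le_sSup (s := A ∩ Iio x) ⟨hzA, hz.2⟩).not_gt hz.1

theorem IsClosed.exists_gap_above (hA : IsClosed A) {b x : α} (hb : b ∈ A) (hxb : x < b)
    (hx : x ∉ closure (A ∩ Ioi x)) : ∃ c ∈ A, x < c ∧ Disjoint (Ioo x c) A := by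
  obtain ⟨c, hcA, hxc, hd⟩ := IsClosed.exists_gap_below (α := αᵒᵈ) hA hb hxb hx
  exact ⟨c, hcA, hxc, disjoint_left.2 fun z hz => disjoint_left.1 hd ⟨hz.2, hz.1⟩⟩

theorem IsClosed.exists_gap_of_subset_union {K U V : Set α} (hK : IsClosed K) (hU : IsOpen U)
    (hV : IsOpen V) (hUV : Disjoint U V) (hKUV : K ⊆ U ∪ V) {a b : α} (ha : a ∈ K ∩ U)
    (hb : b ∈ K ∩ V) (hab : a ≤ b) :
    ∃ c ∈ K ∩ U, ∃ d ∈ K ∩ V, c < d ∧ Disjoint (Ioo c d) K := by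
  have hmemU {z} (hz : z ∈ K) (hzV : z ∉ V) : z ∈ U := (hKUV hz).resolve_right hzV
  have hmemV {z} (hz : z ∈ K) (hzU : z ∉ U) : z ∈ V := (hKUV hz).resolve_left hzU
  set c := sSup (K \ V ∩ Iic b)
  have hc : c ∈ K \ V ∩ Iic b :=
    IsClosed.sSup_mem ⟨a, ⟨ha.1, hUV.notMem_of_mem_left ha.2⟩, hab⟩
      ((hK.sdiff hV).inter isClosed_Iic)
  set d := sInf (K \ U ∩ Ici c)
  have hd : d ∈ K \ U ∩ Ici c :=
    IsClosed.sInf_mem ⟨b, ⟨hb.1, hUV.notMem_of_mem_right hb.2⟩,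
      (hc.2 : c ≤ b)⟩ ((hK.sdiff hU).inter isClosed_Ici)
  have hcU : c ∈ U := hmemU hc.1.1 hc.1.2
  refine ⟨c, ⟨hc.1.1, hcU⟩, d, ⟨hd.1.1, hmemV hd.1.1 hd.1.2⟩,
    (hd.2 : c ≤ d).lt_of_ne fun h => hd.1.2 (h ▸ hcU), disjoint_left.2 fun z hz hzK => ?_⟩
  have hdb : d ≤ b := sInf_le ⟨⟨hb.1, hUV.notMem_of_mem_right hb.2⟩, (hc.2 : c ≤ b)⟩
  by_cases hzU : z ∈ U
  · exact (le_sSup (s := K \ V ∩ Iic b)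
      ⟨⟨hzK, hUV.notMem_of_mem_left hzU⟩, (hz.2.trans_le hdb).le⟩).not_gt hz.1
  · exact (sInf_le (s := K \ U ∩ Ici c) ⟨⟨hzK, hzU⟩, hz.1.le⟩).not_gt hz.2

theorem IsShortcutSet.sInter [TopologicalSpace X] [T2Space X] (hσ : Continuous σ)
    {C : Set (Set α)} (hC : ∀ A ∈ C, IsShortcutSet σ A) (hchain : IsChain (· ⊆ ·) C)
    (hne : C.Nonempty) : IsShortcutSet σ (⋂₀ C) where
  isClosed := isClosed_sInter fun A hA => (hC A hA).isClosed
  bot_mem := fun A hA => (hC A hA).bot_mem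
  top_mem := fun A hA => (hC A hA).top_mem
  apply_eq a b ha hb hab hgap := by
    by_contra hne'
    obtain ⟨U, V, hU, hV, haU, hbV, hUV⟩ := t2_separation hne'
    have : Nonempty C := hne.to_subtype
    -- the compact sets `A ∩ [a, b]` decrease to `{a, b}`
    obtain ⟨⟨A, hAC⟩, hAUV⟩ : ∃ A : C, (A : Set α) ∩ Icc a b ⊆ σ ⁻¹' U ∪ σ ⁻¹' V := by
      refine exists_subset_nhds_of_isCompact' (V := fun A : C => (A : Set α) ∩ Icc a b)
        ?_
        (fun _ => isCompact_Icc.inter_left ((hC _ (Subtype.prop _)).isClosed))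
        (fun A => (hC A A.2).isClosed.inter isClosed_Icc) fun x hx => ?_
      · intro A B
        rcases hchain.total A.2 B.2 with h | h
        · exact ⟨A, Subset.rfl, inter_subset_inter_left _ h⟩
        · exact ⟨B, inter_subset_inter_left _ h, Subset.rfl⟩
      simp only [mem_iInter] at hx
      have hxC : x ∈ ⋂₀ C := fun A hA => (hx ⟨A, hA⟩).1
      have hxab : x ∈ Icc a b := (hx ⟨_, hne.some_mem⟩).2
      refine ((hU.preimage hσ).union (hV.preimage hσ)).mem_nhds ?_
      rcases hxab.1.eq_or_lt with rfl | hax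
      · exact Or.inl haU
      rcases hxab.2.eq_or_lt with rfl | hxb
      · exact Or.inr hbV
      exact (disjoint_left.1 hgap ⟨hax, hxb⟩ hxC).elim
    have hA := hC A hAC
    obtain ⟨c, hc, d, hd, hcd, hcdgap⟩ :=
      (hA.isClosed.inter isClosed_Icc).exists_gap_of_subset_union
        (hU.preimage hσ) (hV.preimage hσ) (hUV.preimage σ) hAUV
        ⟨⟨ha A hAC, le_rfl, hab⟩, haU⟩ ⟨⟨hb A hAC, hab, le_rfl⟩, hbV⟩ hab
    have hgapA : Disjoint (Ioo c d) A := disjoint_left.2 fun z hz hzA =>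
      disjoint_left.1 hcdgap hz ⟨hzA, hc.1.2.1.trans hz.1.le, hz.2.le.trans hd.1.2.2⟩
    exact hUV.ne_of_mem hc.2 hd.2 (hA.apply_eq hc.1.1 hd.1.1 hcd.le hgapA)

theorem exists_minimal_isShortcutSet [DenselyOrdered α] [TopologicalSpace X] [T2Space X]
    (hσ : Continuous σ) : ∃ A, Minimal (IsShortcutSet σ) A := by
  obtain ⟨A, -, hA⟩ := zorn_superset_nonempty {A | IsShortcutSet σ A}
    (fun C hC hchain hne => ⟨⋂₀ C, .sInter hσ hC hchain hne, fun _ => sInter_subset_of_mem⟩)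
    univ (isShortcutSet_univ σ)
  exact ⟨A, hA⟩

theorem IsShortcutSet.diff_Ioo (hA : IsShortcutSet σ A) {a b : α} (ha : a ∈ A) (hb : b ∈ A)
    (hσab : σ a = σ b) : IsShortcutSet σ (A \ Ioo a b) where
  isClosed := hA.isClosed.sdiff isOpen_Ioo
  bot_mem := ⟨hA.bot_mem, fun h => not_lt_bot h.1⟩
  top_mem := ⟨hA.top_mem, fun h => not_top_lt h.2⟩
  apply_eq u v hu hv huv hgap := by
    by_cases hgapA : Disjoint (Ioo u v) A
    · exact hA.apply_eq hu.1 hv.1 huv hgapA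
    -- otherwise `(u, v)` is the gap `(a, b)` that was cut out
    obtain ⟨x, hxuv, hxA⟩ := not_disjoint_iff.1 hgapA
    have hxab : x ∈ Ioo a b := by_contra fun h => disjoint_left.1 hgap hxuv ⟨hxA, h⟩
    have hau : a ≤ u := not_lt.1 fun h => disjoint_left.1 hgap ⟨h, hxab.1.trans hxuv.2⟩
      ⟨ha, fun h' => h'.1.false⟩
    have hvb : v ≤ b := not_lt.1 fun h => disjoint_left.1 hgap ⟨hxuv.1.trans hxab.2, h⟩
      ⟨hb, fun h' => h'.2.false⟩
    have hua : u ≤ a := not_lt.1 fun h => hu.2 ⟨h, hxuv.1.trans hxab.2⟩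
    have hbv : b ≤ v := not_lt.1 fun h => hv.2 ⟨hxab.1.trans hxuv.2, h⟩
    rwa [le_antisymm hua hau, le_antisymm hvb hbv]

theorem Minimal.disjoint_Ioo_of_apply_eq (hA : Minimal (IsShortcutSet σ) A) {a b : α}
    (ha : a ∈ A) (hb : b ∈ A) (hσab : σ a = σ b) : Disjoint (Ioo a b) A := by
  have := hA.eq_of_subset (hA.prop.diff_Ioo ha hb hσab) sdiff_subset
  rw [← this]
  exact disjoint_sdiff_right

theorem Minimal.accPt (hA : Minimal (IsShortcutSet σ) A) {x : α} (hx : x ∈ A) (hx0 : ⊥ < x)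
    (hx1 : x < ⊤) : AccPt x (𝓟 A) := by
  by_contra hacc
  have hiso {s : Set α} (hs : s ⊆ {x}ᶜ) : x ∉ closure (A ∩ s) := fun h =>
    hacc (accPt_iff_frequently_nhdsNE.2 (mem_closure_ne_iff_frequently_within.1
      (closure_mono (t := A \ {x}) (fun _ hz => ⟨hz.1, hs hz.2⟩) h)))
  obtain ⟨c, hcA, hcx, hc⟩ :=
    hA.prop.isClosed.exists_gap_below hA.prop.bot_mem hx0 (hiso fun _ h => h.ne)
  obtain ⟨d, hdA, hxd, hd⟩ :=
    hA.prop.isClosed.exists_gap_above hA.prop.top_mem hx1 (hiso fun _ h => h.ne')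
  have := hA.disjoint_Ioo_of_apply_eq hcA hdA
    ((hA.prop.apply_eq hcA hx hcx.le hc).trans (hA.prop.apply_eq hx hdA hxd.le hd))
  exact disjoint_left.1 this ⟨hcx, hxd⟩ hx

theorem Minimal.preperfect_inter_Ioo (hA : Minimal (IsShortcutSet σ) A) :
    Preperfect (A ∩ Ioo ⊥ ⊤) := fun x hx => by
  simpa only [inter_comm] using
    (hA.accPt hx.1 hx.2.1 hx.2.2).nhds_inter (isOpen_Ioo.mem_nhds hx.2)

end ShortcutSets

section GaloisConnection

variable {α β : Type*} [CompleteLinearOrder α] [TopologicalSpace α] [OrderTopology α]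
  [CompleteLinearOrder β] {Q : α → β}

theorem GaloisConnection.l_mem {A : Set α} {l : β → α} (gc : GaloisConnection l Q)
    (hA : IsClosed A) (hbot : ⊥ ∈ A) (hQ : ∀ s t, s ≤ t → Disjoint (Ioo s t) A → Q s = Q t)
    (y : β) : l y ∈ A := by
  by_contra hy
  obtain ⟨c, hcA, hcy, hc⟩ := hA.exists_gap_below hbot
    (bot_lt_iff_ne_bot.2 fun h : l y = ⊥ => hy (h ▸ hbot))
    fun h => hy (hA.closure_subset (closure_mono inter_subset_left h))
  exact hcy.not_ge (gc.l_le ((gc.le_u_l y).trans (hQ _ _ hcy.le hc).ge))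

theorem GaloisConnection.u_mem {A : Set α} {u : β → α} (gc : GaloisConnection Q u)
    (hA : IsClosed A) (htop : ⊤ ∈ A) (hQ : ∀ s t, s ≤ t → Disjoint (Ioo s t) A → Q s = Q t)
    (y : β) : u y ∈ A :=
  gc.dual.l_mem (α := αᵒᵈ) hA htop (fun s t hst h => (hQ t s hst
    (disjoint_left.2 fun _ hz => disjoint_left.1 h ⟨hz.2, hz.1⟩)).symm) y

variable [TopologicalSpace β] [OrderTopology β]

theorem GaloisConnection.continuousWithinAt_Iic_l [DenselyOrdered β] {l : β → α}
    {u : α → β} (gc : GaloisConnection l u) (y : β) : ContinuousWithinAt l (Iic y) y := by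
  have h := gc.monotone_l.tendsto_nhdsLT y
  rw [sSup_image, ← gc.l_sSup, (Order.IsSuccPrelimit.of_dense y).sSup_Iio] at h
  exact continuousWithinAt_Iio_iff_Iic.1 h

theorem GaloisConnection.continuousWithinAt_Ici_u [DenselyOrdered α] {l : β → α}
    {u : α → β} (gc : GaloisConnection l u) (x : α) : ContinuousWithinAt u (Ici x) x :=
  gc.dual.continuousWithinAt_Iic_l x

theorem Continuous.galoisConnection_sInf (hc : Continuous Q) (hm : Monotone Q)
    (hs : Surjective Q) : GaloisConnection (fun y => sInf {t | y ≤ Q t}) Q := fun y _ =>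
  ⟨fun h => (IsClosed.sInf_mem ((hs y).imp fun _ ht => ht.ge)
    (isClosed_Ici.preimage hc) : y ≤ Q _).trans (hm h), fun h => sInf_le h⟩

theorem Continuous.galoisConnection_sSup (hc : Continuous Q) (hm : Monotone Q)
    (hs : Surjective Q) : GaloisConnection Q (fun y => sSup {t | Q t ≤ y}) :=
  (Continuous.galoisConnection_sInf (α := αᵒᵈ) (β := βᵒᵈ) hc hm.dual hs).dual

end GaloisConnection

theorem Minimal.exists_shortcut {α β X : Type*} [CompleteLinearOrder α] [TopologicalSpace α]
    [OrderTopology α] [DenselyOrdered α] [CompleteLinearOrder β] [TopologicalSpace β]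
    [OrderTopology β] [DenselyOrdered β] [TopologicalSpace X] {σ : α → X} {A : Set α}
    (hA : Minimal (IsShortcutSet σ) A) (hσ : Continuous σ) {Q : α → β} (hQc : Continuous Q)
    (hQm : Monotone Q) (hQs : Surjective Q)
    (hQ : ∀ s t, s ≤ t → (Q s = Q t ↔ Disjoint (Ioo s t) A)) :
    ∃ (τ : β → X) (m : β → α), Continuous τ ∧ Injective τ ∧ StrictMono m ∧
      (∀ y, τ y = σ (m y)) ∧ τ ⊥ = σ ⊥ ∧ τ ⊤ = σ ⊤ := by
  set l := fun y => sInf {t | y ≤ Q t}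
  set u := fun y => sSup {t | Q t ≤ y}
  have gl : GaloisConnection l Q := hQc.galoisConnection_sInf hQm hQs
  have gu : GaloisConnection Q u := hQc.galoisConnection_sSup hQm hQs
  have hQl (y : β) : Q (l y) = y := by obtain ⟨t, rfl⟩ := hQs y; exact gl.u_l_u_eq_u t
  have hQu (y : β) : Q (u y) = y := by obtain ⟨t, rfl⟩ := hQs y; exact gu.l_u_l_eq_l t
  have hQA s t (hst : s ≤ t) := (hQ s t hst).2
  have hlA := gl.l_mem hA.prop.isClosed hA.prop.bot_mem hQA
  have huA := gu.u_mem hA.prop.isClosed hA.prop.top_mem hQA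
  -- `Q ⁻¹' {y} = [l y, u y]`, and `(l y, u y)` is a gap of `A`
  have hlu : σ ∘ l = σ ∘ u := funext fun y => hA.prop.apply_eq (hlA y) (huA y)
    (gl.l_le (hQu y).ge) ((hQ _ _ (gl.l_le (hQu y).ge)).1 (by rw [hQl, hQu]))
  have hinj y y' (hyy' : y ≤ y') (h : σ (l y) = σ (l y')) : y = y' := by
    have := (hQ _ _ (gl.monotone_l hyy')).2 (hA.disjoint_Ioo_of_apply_eq (hlA y) (hlA y') h)
    rwa [hQl, hQl] at this
  refine ⟨σ ∘ l, l, continuous_iff_continuousAt.2 fun y => ?_, fun y y' h => ?_,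
    gl.monotone_l.strictMono_of_injective (LeftInverse.injective hQl), fun _ => rfl,
    congrArg σ gl.l_bot, (congrFun hlu ⊤).trans (congrArg σ gu.u_top)⟩
  · refine continuousAt_iff_continuous_left_right.2
      ⟨hσ.continuousAt.comp_continuousWithinAt (gl.continuousWithinAt_Iic_l y), ?_⟩
    rw [hlu]
    exact hσ.continuousAt.comp_continuousWithinAt (gu.continuousWithinAt_Ici_u y)
  · rcases le_total y y' with hyy' | hyy'
    exacts [hinj y y' hyy' h, (hinj y' y hyy' h.symm).symm]

theorem MeasureTheory.Measure.nullSingletonClass_map {α β : Type*} [MeasurableSpace α]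
    [MeasurableSpace β] [MeasurableSingletonClass β] (μ : Measure α) [NullSingletonClass μ]
    {f : α → β} (hf : Measurable f) (hinj : Injective f) : NullSingletonClass (μ.map f) :=
  ⟨fun x => by
    rw [Measure.map_apply hf (measurableSet_singleton x)]
    exact (subsingleton_singleton.preimage hinj).measure_zero μ⟩

section PerfectSets

variable {α : Type*} [MetricSpace α] [CompleteSpace α] [MeasurableSpace α] [BorelSpace α]
  {C : Set α}

theorem Perfect.exists_probabilityMeasure_nullSingletonClass (hC : Perfect C)
    (hne : C.Nonempty) :
    ∃ μ : Measure α, IsProbabilityMeasure μ ∧ NullSingletonClass μ ∧ μ Cᶜ = 0 := by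
  obtain ⟨f, hfC, hfc, hfi⟩ := hC.exists_nat_bool_injection hne
  let e : ℝ ≃ᵐ (ℕ → Bool) := PolishSpace.measurableEquivNatBoolOfNotCountable not_countable
  have : IsProbabilityMeasure (volume.restrict (Icc (0 : ℝ) 1)) := ⟨by simp⟩
  have hg : Measurable (f ∘ e) := hfc.measurable.comp e.measurable
  refine ⟨(volume.restrict (Icc (0 : ℝ) 1)).map (f ∘ e),
    Measure.isProbabilityMeasure_map hg.aemeasurable,
    Measure.nullSingletonClass_map _ hg (hfi.comp e.injective), ?_⟩
  have : (f ∘ e) ⁻¹' Cᶜ = ∅ :=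
    eq_empty_of_forall_notMem fun x hx => hx (hfC (mem_range_self _))
  rw [Measure.map_apply hg hC.closed.measurableSet.compl, this, measure_empty]

theorem Perfect.exists_probabilityMeasure_pos_of_isOpen [SecondCountableTopology α]
    (hC : Perfect C) (hne : C.Nonempty) :
    ∃ μ : Measure α, IsProbabilityMeasure μ ∧ NullSingletonClass μ ∧ μ Cᶜ = 0 ∧
      ∀ U, IsOpen U → (U ∩ C).Nonempty → 0 < μ U := by
  obtain ⟨b, hbc, -, hb⟩ := TopologicalSpace.exists_countable_basis α
  obtain ⟨V₀, hV₀, -⟩ := hb.exists_closure_subset (univ_mem (f := 𝓝 hne.some))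
  obtain ⟨V, rfl⟩ := hbc.exists_eq_range ⟨V₀, hV₀⟩
  have hν (n : ℕ) : ∃ ν : Measure α, IsProbabilityMeasure ν ∧ NullSingletonClass ν ∧
      ν Cᶜ = 0 ∧ ((V n ∩ C).Nonempty → ν (closure (V n))ᶜ = 0) := by
    by_cases h : (V n ∩ C).Nonempty
    · have hP := (hC.acc.open_inter (hb.isOpen (mem_range_self n))).perfect_closure
      obtain ⟨ν, h₁, h₂, h₃⟩ := hP.exists_probabilityMeasure_nullSingletonClass h.closure
      have hsub : closure (V n ∩ C) ⊆ C := hC.closed.closure_subset_iff.2 inter_subset_right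
      exact ⟨ν, h₁, h₂, measure_mono_null (compl_subset_compl.2 hsub) h₃,
        fun _ => measure_mono_null
          (compl_subset_compl.2 (closure_mono inter_subset_left)) h₃⟩
    · obtain ⟨ν, h₁, h₂, h₃⟩ := hC.exists_probabilityMeasure_nullSingletonClass hne
      exact ⟨ν, h₁, h₂, h₃, fun h' => (h h').elim⟩
  choose ν hν₁ hν₂ hν₃ hν₄ using hν
  refine ⟨Measure.sum fun n => (2⁻¹ : ℝ≥0∞) ^ (n + 1) • ν n, ⟨?_⟩, ⟨fun x => ?_⟩, ?_,
    fun U hU ⟨x, hxU, hxC⟩ => ?_⟩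
  · simp only [Measure.sum_apply _ MeasurableSet.univ, Measure.smul_apply, measure_univ,
      smul_eq_mul, mul_one, ENNReal.tsum_geometric_add_one, ENNReal.one_sub_inv_two, inv_inv]
    exact ENNReal.inv_mul_cancel two_ne_zero ENNReal.ofNat_ne_top
  · simp [Measure.sum_apply _ (measurableSet_singleton x)]
  · simp [Measure.sum_apply _ hC.closed.measurableSet.compl, hν₃]
  obtain ⟨_, ⟨n, rfl⟩, hxn, hnU⟩ := hb.exists_closure_subset (hU.mem_nhds hxU)
  have h₁ : ν n (closure (V n)) = 1 :=
    (prob_compl_eq_zero_iff isClosed_closure.measurableSet).1 (hν₄ n ⟨x, hxn, hxC⟩)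
  calc 0 < (2⁻¹ : ℝ≥0∞) ^ (n + 1) * ν n (closure (V n)) := by
        rw [h₁, mul_one]; exact ENNReal.pow_pos (ENNReal.inv_pos.2 ENNReal.ofNat_ne_top) _
    _ ≤ ((2⁻¹ : ℝ≥0∞) ^ (n + 1) • ν n) U := by
      rw [Measure.smul_apply, smul_eq_mul]; gcongr
    _ ≤ _ := Measure.le_iff'.1 (Measure.le_sum _ n) U

end PerfectSets

theorem ProbabilityTheory.continuous_cdf (ν : Measure ℝ) [IsProbabilityMeasure ν]
    [NullSingletonClass ν] : Continuous (cdf ν) := by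
  refine continuous_iff_continuousAt.2 fun x =>
    ((cdf ν).mono.continuousAt_iff_leftLim_eq_rightLim).2 ?_
  have h := (cdf ν).measure_singleton x
  rw [measure_cdf, measure_singleton, eq_comm, ENNReal.ofReal_eq_zero, sub_nonpos] at h
  rw [StieltjesFunction.rightLim_eq]
  exact le_antisymm ((cdf ν).mono.leftLim_le le_rfl) h

theorem unitInterval.exists_monotone_surjective_eq_iff_measure_Ioo (μ : Measure unitInterval)
    [IsProbabilityMeasure μ] [NullSingletonClass μ] :
    ∃ Q : unitInterval → unitInterval, Continuous Q ∧ Monotone Q ∧ Surjective Q ∧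
      ∀ s t, s ≤ t → (Q s = Q t ↔ μ (Ioo s t) = 0) := by
  set ν := μ.map Subtype.val
  have : IsProbabilityMeasure ν := Measure.isProbabilityMeasure_map (by fun_prop)
  have : NullSingletonClass ν := μ.nullSingletonClass_map (by fun_prop) Subtype.val_injective
  let Q : unitInterval → unitInterval := fun t => ⟨cdf ν t, cdf_nonneg _ _, cdf_le_one _ _⟩
  have hQc : Continuous Q := ((continuous_cdf ν).comp continuous_subtype_val).subtype_mk _
  have hQm : Monotone Q := fun s t h => (cdf ν).mono h
  have hQ0 : Q 0 = 0 := Subtype.ext <| (unitInterval.cdf_eq_real μ 0).trans <| by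
    simp [Measure.real]
  have hQ1 : Q 1 = 1 := Subtype.ext <| (unitInterval.cdf_eq_real μ 1).trans <| by
    rw [show Icc (0 : unitInterval) 1 = univ from Icc_bot_top]; simp
  refine ⟨Q, hQc, hQm, fun y => ?_, fun s t hst => ?_⟩
  · exact intermediate_value_univ 0 1 hQc (by rw [hQ0, hQ1]; exact ⟨bot_le, le_top⟩)
  have h : ν (Ioc s t) = ENNReal.ofReal (cdf ν t - cdf ν s) := by
    rw [← (cdf ν).measure_Ioc, measure_cdf]
  rw [Measure.map_apply (by fun_prop) measurableSet_Ioc, preimage_subtype_val_Ioc] at h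
  rw [measure_congr Ioo_ae_eq_Ioc, h, ENNReal.ofReal_eq_zero, sub_nonpos, Subtype.ext_iff]
  exact ⟨fun h => h.ge, fun h => le_antisymm (hQm hst) h⟩

theorem Perfect.exists_monotone_surjective_eq_iff_disjoint_Ioo {P : Set unitInterval}
    (hP : Perfect P) (hne : P.Nonempty) :
    ∃ Q : unitInterval → unitInterval, Continuous Q ∧ Monotone Q ∧ Surjective Q ∧
      ∀ s t, s ≤ t → (Q s = Q t ↔ Disjoint (Ioo s t) P) := by
  obtain ⟨μ, _, _, hμP, hμpos⟩ := hP.exists_probabilityMeasure_pos_of_isOpen hne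
  obtain ⟨Q, hQc, hQm, hQs, hQ⟩ := unitInterval.exists_monotone_surjective_eq_iff_measure_Ioo μ
  refine ⟨Q, hQc, hQm, hQs, fun s t hst => (hQ s t hst).trans ⟨fun h => ?_, fun h => ?_⟩⟩
  · exact disjoint_iff_inter_eq_empty.2 (not_nonempty_iff_eq_empty.1 fun hne' =>
      (hμpos _ isOpen_Ioo hne').ne' h)
  · exact measure_mono_null (subset_compl_iff_disjoint_right.2 h) hμP

/-- Every topological path in a Hausdorff space with distinct endpoints can be
shortcut by an injective topological path with the same endpoints: there is an
injective continuous `τ` and a strictly increasing (not necessarily continuous)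
`m` with `τ = σ ∘ m`. -/
theorem exists_injective_shortcut
    {X : Type} [TopologicalSpace X] [T2Space X]
    (σ : unitInterval → X) (hσ : Continuous σ) (hne : σ 0 ≠ σ 1) :
    ∃ (τ : unitInterval → X) (m : unitInterval → unitInterval),
      Continuous τ ∧ Function.Injective τ ∧ StrictMono m ∧
      (∀ x, τ x = σ (m x)) ∧ τ 0 = σ 0 ∧ τ 1 = σ 1 := by
  obtain ⟨A, hA⟩ := exists_minimal_isShortcutSet hσ
  obtain ⟨Q, hQc, hQm, hQs, hQ⟩ :=
    hA.preperfect_inter_Ioo.perfect_closure.exists_monotone_surjective_eq_iff_disjoint_Ioo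
      (hA.prop.nonempty_inter_Ioo hne).closure
  exact hA.exists_shortcut hσ hQc hQm hQs fun s t hst =>
    (hQ s t hst).trans hA.prop.isClosed.disjoint_Ioo_closure_inter_Ioo_iff
end

section
/- Let X be a Hausdorff topological space and let σ : [0,1] → X be a continuous map with σ(0) ≠ σ(1). Then there exists a closed set F ⊆ [0,1] such that: (i) σ(0) and σ(1) lie in σ(F); (ii) whenever a < b are points of F with (a,b) ∩ F = ∅ (equivalently, (a,b) is a connected component of [0,1]∖F), one has σ(a) = σ(b); (iii) no proper closed subset of F satisfies both (i) and (ii); and (iv) σ(F) is an arc in X, i.e. the image of a topological embedding of [0,1] into X. -/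
/-!
Zorn's lemma gives a minimal admissible closed set `F`: in the compact space `[0,1]` a chain of
admissible sets has an admissible intersection, the gap condition passing to the limit because
`σ` is continuous and `X` is Hausdorff. Minimality forces `σ a = σ b` for `a < b` in `F` only
when `(a, b)` misses `F` (otherwise `F \ (a, b)` would be smaller), and it forces `F` to have no
isolated points. A perfect set carries a finite atomless measure `ν` charging every open set that
meets it (push forward coin tossing along Cantor sets inside the portions of `F`). The normalised
distribution function `t ↦ ν [0, t] / ν [0, 1]` then maps `F` continuously onto `[0, 1]` and
identifies exactly the endpoints of gaps, that is, exactly the pairs that `σ` identifies; so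
`σ` restricted to `F` factors through a continuous injection `[0, 1] → X`, an embedding by
compactness.
-/

open Set Filter Topology MeasureTheory

section Gaps

variable {α X : Type*} [LinearOrder α]

def AgreesOnGaps (σ : α → X) (F : Set α) : Prop :=
  ∀ a ∈ F, ∀ b ∈ F, a < b → (∀ c, a < c → c < b → c ∉ F) → σ a = σ b

variable {σ : α → X} {F : Set α}

theorem AgreesOnGaps.eq_of_le (h : AgreesOnGaps σ F) {a b : α} (ha : a ∈ F) (hb : b ∈ F)
    (hab : a ≤ b) (hgap : ∀ c, a < c → c < b → c ∉ F) : σ a = σ b := by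
  rcases hab.eq_or_lt with rfl | hlt
  · rfl
  · exact h a ha b hb hlt hgap

theorem AgreesOnGaps.inter_Icc (h : AgreesOnGaps σ F) (u v : α) :
    AgreesOnGaps σ (F ∩ Icc u v) := fun a ha b hb hab hgap =>
  h a ha.1 b hb.1 hab fun c hac hcb hc =>
    hgap c hac hcb ⟨hc, ha.2.1.trans hac.le, hcb.le.trans hb.2.2⟩

theorem AgreesOnGaps.diff_Ioo (h : AgreesOnGaps σ F) {a b : α} (ha : a ∈ F) (hb : b ∈ F)
    (hσ : σ a = σ b) : AgreesOnGaps σ (F \ Ioo a b) := by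
  intro c hc d hd hcd hgap
  have hgapF : ∀ x, c < x → x < d → x ∉ Ioo a b → x ∉ F := fun x h₁ h₂ hx hxF =>
    hgap x h₁ h₂ ⟨hxF, hx⟩
  by_cases hdisj : d ≤ a ∨ b ≤ c
  · refine h c hc.1 d hd.1 hcd fun x h₁ h₂ => hgapF x h₁ h₂ fun hx => ?_
    rcases hdisj with hda | hbc
    · exact (h₂.trans_le hda).not_gt hx.1
    · exact (hbc.trans_lt h₁).not_gt hx.2
  simp only [not_or, not_le] at hdisj
  have hca : c ≤ a := not_lt.1 fun hac => hc.2 ⟨hac, hdisj.2⟩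
  have hbd : b ≤ d := not_lt.1 fun hdb => hd.2 ⟨hdisj.1, hdb⟩
  calc σ c = σ a := h.eq_of_le hc.1 ha hca fun x h₁ h₂ =>
        hgapF x h₁ (h₂.trans hdisj.1) fun hx => h₂.not_gt hx.1
    _ = σ b := hσ
    _ = σ d := h.eq_of_le hb hd.1 hbd fun x h₁ h₂ =>
        hgapF x (hdisj.2.trans h₁) h₂ fun hx => h₁.not_gt hx.2

end Gaps

section ClosedSubsets

variable {α : Type*} [CompleteLinearOrder α] [TopologicalSpace α] [OrderTopology α]
  {F : Set α}

theorem IsClosed.exists_gap_right_of_not_accPt (hF : IsClosed F) {x y : α}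
    (hx : ¬AccPt x (𝓟 F)) (hy : y ∈ F) (hxy : x < y) :
    ∃ b ∈ F, x < b ∧ ∀ c, x < c → c < b → c ∉ F := by
  have hxcl : x ∉ closure (F \ {x}) := by
    rwa [mem_closure_iff_clusterPt, ← accPt_principal_iff_clusterPt]
  set S := F ∩ Ioi x
  have hS : sInf S ∈ closure S := sInf_mem_closure ⟨y, hy, hxy⟩
  have hSF : closure S ⊆ F := closure_minimal inter_subset_left hF
  have hxS : x ≤ sInf S := le_sInf fun c hc => hc.2.le
  have hsub : S ⊆ F \ {x} := fun c hc => ⟨hc.1, hc.2.ne'⟩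
  have hne : sInf S ≠ x := fun h => hxcl (h ▸ closure_mono hsub hS)
  exact ⟨sInf S, hSF hS, lt_of_le_of_ne hxS hne.symm, fun c hxc hcS hc =>
    (sInf_le ⟨hc, hxc⟩ : sInf S ≤ c).not_gt hcS⟩

theorem IsClosed.exists_gap_left_of_not_accPt (hF : IsClosed F) {x y : α}
    (hx : ¬AccPt x (𝓟 F)) (hy : y ∈ F) (hyx : y < x) :
    ∃ a ∈ F, a < x ∧ ∀ c, a < c → c < x → c ∉ F := by
  obtain ⟨a, ha, hax, hgap⟩ := hF.exists_gap_right_of_not_accPt (α := αᵒᵈ) hx hy hyx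
  exact ⟨a, ha, hax, fun c h₁ h₂ => hgap c h₂ h₁⟩

theorem IsClosed.exists_nearest_mem (hF : IsClosed F) (hne : F.Nonempty) (r : α) :
    ∃ a ∈ F, (a ≤ r ∧ ∀ c, a < c → c < r → c ∉ F) ∨
      (r ≤ a ∧ ∀ c, r < c → c < a → c ∉ F) := by
  rcases (F ∩ Iic r).eq_empty_or_nonempty with h | h
  · refine ⟨sInf F, hF.sInf_mem hne,
      Or.inr ⟨?_, fun c _ hc hcF => (sInf_le hcF).not_gt hc⟩⟩
    exact le_sInf fun c hc => le_of_not_ge fun hcr => h.subset (mem_inter hc hcr)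
  · have hmem := (hF.inter isClosed_Iic).sSup_mem h
    exact ⟨_, hmem.1, Or.inl ⟨hmem.2, fun c hc hcr hcF =>
      (le_sSup (mem_inter hcF hcr.le)).not_gt hc⟩⟩

end ClosedSubsets

theorem IsChain.exists_inter_eq_empty_of_sInter {Y : Type*} [TopologicalSpace Y]
    [CompactSpace Y] {c : Set (Set Y)} (hc : IsChain (· ⊆ ·) c) (hne : c.Nonempty)
    (hcl : ∀ G ∈ c, IsClosed G) {K : Set Y} (hK : IsClosed K) (h : ⋂₀ c ∩ K = ∅) :
    ∃ G ∈ c, G ∩ K = ∅ := by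
  have : Nonempty c := hne.to_subtype
  obtain ⟨G, hG⟩ := hK.isCompact.elim_directed_family_closed (fun G : c => (G : Set Y))
    (fun G => hcl G G.2) (by rwa [← sInter_eq_iInter, inter_comm]) fun G H =>
      (hc.total G.2 H.2).elim (fun h => ⟨G, subset_rfl, h⟩) fun h => ⟨H, h, subset_rfl⟩
  exact ⟨G, G.2, by rwa [inter_comm]⟩

section Admissible

variable {α X : Type*} [CompleteLinearOrder α] [TopologicalSpace α] {σ : α → X} {p q : X}
  {F : Set α}

def IsAdmissible (σ : α → X) (p q : X) (F : Set α) : Prop :=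
  IsClosed F ∧ p ∈ σ '' F ∧ q ∈ σ '' F ∧ AgreesOnGaps σ F

abbrev IsMinimalAdmissible (σ : α → X) (p q : X) (F : Set α) : Prop :=
  Minimal (IsAdmissible σ p q) F

theorem isAdmissible_univ [DenselyOrdered α] (σ : α → X) (x y : α) :
    IsAdmissible σ (σ x) (σ y) univ :=
  ⟨isClosed_univ, mem_image_of_mem σ (mem_univ x), mem_image_of_mem σ (mem_univ y),
    fun _ _ _ _ hab hgap =>
      let ⟨c, hac, hcb⟩ := exists_between hab
      (hgap c hac hcb (mem_univ c)).elim⟩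

theorem IsAdmissible.nonempty (h : IsAdmissible σ p q F) : F.Nonempty :=
  (nonempty_of_mem h.2.1).of_image

variable [OrderTopology α]

theorem AgreesOnGaps.exists_eq_across_Icc (hF : AgreesOnGaps σ F) (hcl : IsClosed F)
    {a a' b' b : α} (ha : a ∈ F) (hb : b ∈ F) (haa' : a ≤ a') (ha'b' : a' ≤ b')
    (hb'b : b' ≤ b) (hK : ∀ x ∈ F, x ∉ Icc a' b') :
    ∃ x ∈ Ico a a', ∃ y ∈ Ioc b' b, σ x = σ y := by
  set x := sSup (F ∩ Iic a')
  set y := sInf (F ∩ Ici b')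
  have hx : x ∈ F ∩ Iic a' := (hcl.inter isClosed_Iic).sSup_mem ⟨a, ha, haa'⟩
  have hy : y ∈ F ∩ Ici b' := (hcl.inter isClosed_Ici).sInf_mem ⟨b, hb, hb'b⟩
  have hxa' : x < a' := hx.2.lt_of_ne fun h => hK x hx.1 ⟨h.ge, h ▸ ha'b'⟩
  have hb'y : b' < y := hy.2.lt_of_ne' fun h => hK y hy.1 ⟨h ▸ ha'b', h.le⟩
  refine ⟨x, ⟨le_sSup ⟨ha, haa'⟩, hxa'⟩, y, ⟨hb'y, sInf_le ⟨hb, hb'b⟩⟩,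
    hF x hx.1 y hy.1 ((hxa'.trans_le ha'b').trans hb'y) fun c hxc hcy hc => ?_⟩
  rcases le_or_gt c a' with hca' | ha'c
  · exact (le_sSup (mem_inter hc hca') : c ≤ x).not_gt hxc
  rcases le_or_gt b' c with hb'c | hcb'
  · exact (sInf_le (mem_inter hc hb'c) : y ≤ c).not_gt hcy
  exact hK c hc ⟨ha'c.le, hcb'.le⟩

variable [TopologicalSpace X] [T2Space X]

theorem agreesOnGaps_sInter (hσ : Continuous σ) {c : Set (Set α)} (hc : IsChain (· ⊆ ·) c)
    (hne : c.Nonempty) (hcl : ∀ G ∈ c, IsClosed G) (hgap : ∀ G ∈ c, AgreesOnGaps σ G) :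
    AgreesOnGaps σ (⋂₀ c) := by
  intro a ha b hb hab hgapc
  obtain ⟨G₀, hG₀⟩ := hne
  rcases (Ioo a b).eq_empty_or_nonempty with hem | ⟨m, ham, hmb⟩
  · exact hgap G₀ hG₀ a (ha G₀ hG₀) b (hb G₀ hG₀) hab fun x h₁ h₂ _ =>
      eq_empty_iff_forall_notMem.1 hem x ⟨h₁, h₂⟩
  by_contra hσab
  obtain ⟨U, V, hU, hV, haU, hbV, hUV⟩ := t2_separation hσab
  obtain ⟨a', ⟨haa', ha'm⟩, hUa⟩ :=
    exists_Ico_subset_of_mem_nhds' (hσ.continuousAt.preimage_mem_nhds (hU.mem_nhds haU)) ham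
  obtain ⟨b', ⟨hmb', hb'b⟩, hVb⟩ :=
    exists_Ioc_subset_of_mem_nhds' (hσ.continuousAt.preimage_mem_nhds (hV.mem_nhds hbV)) hmb
  obtain ⟨G, hGc, hGK⟩ := hc.exists_inter_eq_empty_of_sInter ⟨G₀, hG₀⟩ hcl isClosed_Icc
    (eq_empty_iff_forall_notMem.2 fun x hx =>
      hgapc x (haa'.trans_le hx.2.1) (hx.2.2.trans_lt hb'b) hx.1)
  obtain ⟨x, hx, y, hy, hxy⟩ := (hgap G hGc).exists_eq_across_Icc (hcl G hGc) (ha G hGc)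
    (hb G hGc) haa'.le (ha'm.trans hmb') hb'b.le fun x hx hxK =>
      eq_empty_iff_forall_notMem.1 hGK x ⟨hx, hxK⟩
  exact hUV.ne_of_mem (hUa hx) (hVb hy) hxy

theorem mem_image_sInter (hσ : Continuous σ) {c : Set (Set α)} (hc : IsChain (· ⊆ ·) c)
    (hne : c.Nonempty) (hcl : ∀ G ∈ c, IsClosed G) (h : ∀ G ∈ c, p ∈ σ '' G) :
    p ∈ σ '' ⋂₀ c := by
  by_contra hp
  obtain ⟨G, hGc, hG⟩ := hc.exists_inter_eq_empty_of_sInter hne hcl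
    (isClosed_singleton.preimage hσ) (eq_empty_iff_forall_notMem.2 fun x hx => hp ⟨x, hx⟩)
  obtain ⟨x, hx, rfl⟩ := h G hGc
  exact eq_empty_iff_forall_notMem.1 hG x ⟨hx, rfl⟩

theorem IsAdmissible.sInter (hσ : Continuous σ) {c : Set (Set α)} (hc : IsChain (· ⊆ ·) c)
    (hne : c.Nonempty) (hadm : ∀ G ∈ c, IsAdmissible σ p q G) :
    IsAdmissible σ p q (⋂₀ c) := by
  have hcl : ∀ G ∈ c, IsClosed G := fun G hG => (hadm G hG).1
  exact ⟨isClosed_sInter hcl, mem_image_sInter hσ hc hne hcl fun G hG => (hadm G hG).2.1,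
    mem_image_sInter hσ hc hne hcl fun G hG => (hadm G hG).2.2.1,
    agreesOnGaps_sInter hσ hc hne hcl fun G hG => (hadm G hG).2.2.2⟩

theorem IsAdmissible.exists_minimal_subset (hσ : Continuous σ) (hF : IsAdmissible σ p q F) :
    ∃ F' ⊆ F, IsMinimalAdmissible σ p q F' :=
  zorn_superset_nonempty {G | IsAdmissible σ p q G} (fun c hcS hc hne =>
    ⟨⋂₀ c, IsAdmissible.sInter hσ hc hne hcS, fun _ => sInter_subset_of_mem⟩) F hF

end Admissible

section MinimalAdmissible

variable {α X : Type*} [CompleteLinearOrder α] [TopologicalSpace α] [OrderTopology α]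
  {σ : α → X} {p q : X} {F : Set α}

namespace IsMinimalAdmissible

theorem subset_uIcc (hF : IsMinimalAdmissible σ p q F) {x y : α} (hx : x ∈ F) (hy : y ∈ F)
    (hpq : {p, q} ⊆ σ '' {x, y}) : F ⊆ uIcc x y := by
  have hxy : ({x, y} : Set α) ⊆ F ∩ uIcc x y :=
    insert_subset ⟨hx, left_mem_uIcc⟩ (singleton_subset_iff.2 ⟨hy, right_mem_uIcc⟩)
  have hadm : IsAdmissible σ p q (F ∩ uIcc x y) :=
    ⟨hF.prop.1.inter isClosed_Icc, image_mono hxy (hpq (mem_insert p _)),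
      image_mono hxy (hpq (mem_insert_of_mem p rfl)), hF.prop.2.2.2.inter_Icc _ _⟩
  rw [← hF.eq_of_subset hadm inter_subset_left]
  exact inter_subset_right

theorem sInf_eq_and_sSup_eq (hF : IsMinimalAdmissible σ p q F) {x y : α} (hx : x ∈ F)
    (hy : y ∈ F) (hxy : x ≤ y) (hpq : {p, q} ⊆ σ '' {x, y}) : sInf F = x ∧ sSup F = y := by
  have hF' : F ⊆ Icc x y := uIcc_of_le hxy ▸ hF.subset_uIcc hx hy hpq
  exact ⟨IsLeast.csInf_eq ⟨hx, fun z hz => (hF' hz).1⟩,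
    IsGreatest.csSup_eq ⟨hy, fun z hz => (hF' hz).2⟩⟩

theorem pair_subset_image_sInf_sSup (hF : IsMinimalAdmissible σ p q F) :
    {p, q} ⊆ σ '' {sInf F, sSup F} := by
  obtain ⟨x, hx, rfl⟩ := hF.prop.2.1
  obtain ⟨y, hy, rfl⟩ := hF.prop.2.2.1
  rcases le_total x y with hxy | hyx
  · obtain ⟨h₁, h₂⟩ := hF.sInf_eq_and_sSup_eq hx hy hxy (image_pair σ x y).symm.subset
    rw [h₁, h₂, image_pair]
  · have hpq : {σ x, σ y} ⊆ σ '' {y, x} := by rw [image_pair, pair_comm]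
    obtain ⟨h₁, h₂⟩ := hF.sInf_eq_and_sSup_eq hy hx hyx hpq
    rw [h₁, h₂]
    exact hpq

theorem sInf_lt_sSup (hF : IsMinimalAdmissible σ p q F) (hpq : p ≠ q) : sInf F < sSup F := by
  refine (sInf_le_sSup hF.prop.nonempty).lt_of_ne fun h => hpq ?_
  have := hF.pair_subset_image_sInf_sSup
  rw [h, pair_eq_singleton, image_singleton, insert_subset_iff, singleton_subset_iff] at this
  exact this.1.trans this.2.symm

theorem notMem_of_eq (hF : IsMinimalAdmissible σ p q F) {a b : α} (ha : a ∈ F) (hb : b ∈ F)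
    (hσ : σ a = σ b) : ∀ c, a < c → c < b → c ∉ F := by
  have hext : {sInf F, sSup F} ⊆ F \ Ioo a b :=
    insert_subset ⟨hF.prop.1.sInf_mem hF.prop.nonempty, fun h => (sInf_le ha).not_gt h.1⟩
      (singleton_subset_iff.2
        ⟨hF.prop.1.sSup_mem hF.prop.nonempty, fun h => (le_sSup hb).not_gt h.2⟩)
  have hpq := hF.pair_subset_image_sInf_sSup
  have hadm : IsAdmissible σ p q (F \ Ioo a b) :=
    ⟨hF.prop.1.sdiff isOpen_Ioo, image_mono hext (hpq (mem_insert p _)),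
      image_mono hext (hpq (mem_insert_of_mem p rfl)), hF.prop.2.2.2.diff_Ioo ha hb hσ⟩
  intro c hac hcb hc
  rw [← hF.eq_of_subset hadm sdiff_subset] at hc
  exact hc.2 ⟨hac, hcb⟩

theorem sInf_lt_of_eq (hF : IsMinimalAdmissible σ p q F) {a b : α} (ha : a ∈ F) (hb : b ∈ F)
    (hab : a < b) (hσ : σ a = σ b) : sInf F < a := by
  refine (sInf_le ha).lt_of_ne fun h => ?_
  have hpq : {p, q} ⊆ σ '' {b, sSup F} := by
    rw [image_pair, ← hσ, ← h, ← image_pair]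
    exact hF.pair_subset_image_sInf_sSup
  have := hF.subset_uIcc hb (hF.prop.1.sSup_mem hF.prop.nonempty) hpq ha
  rw [uIcc_of_le (le_sSup hb)] at this
  exact hab.not_ge this.1

theorem lt_sSup_of_eq (hF : IsMinimalAdmissible σ p q F) {a b : α} (ha : a ∈ F) (hb : b ∈ F)
    (hab : a < b) (hσ : σ a = σ b) : b < sSup F := by
  refine (le_sSup hb).lt_of_ne' fun h => ?_
  have hpq : {p, q} ⊆ σ '' {sInf F, a} := by
    rw [image_pair, hσ, ← h, ← image_pair]
    exact hF.pair_subset_image_sInf_sSup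
  have := hF.subset_uIcc (hF.prop.1.sInf_mem hF.prop.nonempty) ha hpq hb
  rw [uIcc_of_le (sInf_le ha)] at this
  exact hab.not_ge this.2

theorem perfect (hF : IsMinimalAdmissible σ p q F) (hpq : p ≠ q) : Perfect F := by
  refine ⟨hF.prop.1, fun x hx => by_contra fun hacc => ?_⟩
  have right (h : x < sSup F) : ∃ b ∈ F, x < b ∧ σ x = σ b :=
    let ⟨b, hb, hxb, hgap⟩ :=
      hF.prop.1.exists_gap_right_of_not_accPt hacc (hF.prop.1.sSup_mem hF.prop.nonempty) h
    ⟨b, hb, hxb, hF.prop.2.2.2 x hx b hb hxb hgap⟩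
  have left (h : sInf F < x) : ∃ a ∈ F, a < x ∧ σ a = σ x :=
    let ⟨a, ha, hax, hgap⟩ :=
      hF.prop.1.exists_gap_left_of_not_accPt hacc (hF.prop.1.sInf_mem hF.prop.nonempty) h
    ⟨a, ha, hax, hF.prop.2.2.2 a ha x hx hax hgap⟩
  rcases (le_sSup hx).lt_or_eq with hxM | hxM
  · obtain ⟨b, hb, hxb, hxσb⟩ := right hxM
    obtain ⟨a, ha, hax, haσx⟩ := left (hF.sInf_lt_of_eq hx hb hxb hxσb)
    exact hF.notMem_of_eq ha hb (haσx.trans hxσb) x hax hxb hx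
  · obtain ⟨a, ha, hax, haσx⟩ := left (hxM ▸ hF.sInf_lt_sSup hpq)
    exact (hF.lt_sSup_of_eq ha hx hax haσx).ne hxM

end IsMinimalAdmissible

end MinimalAdmissible

section AtomlessMeasure

theorem infinitePi_uniformOfFintype_bool_singleton (x : ℕ → Bool) :
    Measure.infinitePi (fun _ : ℕ => (PMF.uniformOfFintype Bool).toMeasure) {x} = 0 := by
  rw [Measure.infinitePi_singleton]
  simp only [PMF.toMeasure_apply_singleton _ _ (measurableSet_singleton _),
    PMF.uniformOfFintype_apply, Fintype.card_bool, Nat.cast_ofNat]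
  rw [ENNReal.tprod_eq_iInf_prod fun _ => ENNReal.inv_le_one.2 one_le_two]
  refine le_antisymm (ge_of_tendsto' (ENNReal.tendsto_pow_atTop_nhds_zero_of_lt_one
    (ENNReal.inv_lt_one.2 ENNReal.one_lt_two)) fun n => iInf_le_of_le (Finset.range n) ?_) bot_le
  simp

variable {β : Type*} [MetricSpace β] [CompleteSpace β] [MeasurableSpace β] [BorelSpace β]
  {C : Set β}

theorem Perfect.exists_probabilityMeasure (hC : Perfect C) (hne : C.Nonempty) :
    ∃ μ : Measure β, IsProbabilityMeasure μ ∧ NullSingletonClass μ ∧ μ Cᶜ = 0 := by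
  obtain ⟨f, hfC, hf, hinj⟩ := hC.exists_nat_bool_injection hne
  set coin := Measure.infinitePi fun _ : ℕ => (PMF.uniformOfFintype Bool).toMeasure
  have : NullSingletonClass coin := ⟨infinitePi_uniformOfFintype_bool_singleton⟩
  refine ⟨coin.map f, Measure.isProbabilityMeasure_map hf.aemeasurable, ⟨fun x => ?_⟩, ?_⟩
  · rw [Measure.map_apply hf.measurable (measurableSet_singleton x)]
    exact Set.Subsingleton.measure_zero (fun a ha b hb => hinj (ha.trans hb.symm)) coin
  · have : f ⁻¹' Cᶜ = ∅ :=
      eq_empty_iff_forall_notMem.2 fun y hy => hy (hfC (mem_range_self y))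
    rw [Measure.map_apply hf.measurable hC.closed.isOpen_compl.measurableSet, this, measure_empty]

theorem Perfect.exists_finiteMeasure_pos_of_isOpen [SecondCountableTopology β]
    (hC : Perfect C) :
    ∃ ν : Measure β, IsFiniteMeasure ν ∧ NullSingletonClass ν ∧ ν Cᶜ = 0 ∧
      ∀ U, IsOpen U → (U ∩ C).Nonempty → 0 < ν U := by
  obtain ⟨B, hBc, -, hB⟩ := TopologicalSpace.exists_countable_basis β
  let ι := {v : Set β // v ∈ B ∧ (v ∩ C).Nonempty}
  have : Countable ι := (hBc.mono fun _ hv => hv.1).to_subtype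
  have hperf (i : ι) : Perfect (closure (i.1 ∩ C)) ∧ (closure (i.1 ∩ C)).Nonempty :=
    let ⟨x, hxv, hxC⟩ := i.2.2
    hC.closure_nhds_inter x hxC hxv (hB.isOpen i.2.1)
  choose μ hμprob hμnull hμC using fun i => (hperf i).1.exists_probabilityMeasure (hperf i).2
  obtain ⟨w, hw0, hw1⟩ := ENNReal.exists_pos_sum_of_countable' one_ne_zero ι
  set ν := Measure.sum fun i => w i • μ i
  have hν (s : Set β) (hs : MeasurableSet s) : ν s = ∑' i, w i * μ i s := by
    simp [ν, Measure.sum_apply _ hs]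
  refine ⟨ν, ⟨?_⟩, ⟨fun x => ?_⟩, ?_, fun U hU ⟨x, hxU, hxC⟩ => ?_⟩
  · rw [hν univ MeasurableSet.univ]
    simpa [measure_univ] using hw1.trans ENNReal.one_lt_top
  · rw [hν _ (measurableSet_singleton x)]
    exact ENNReal.tsum_eq_zero.2 fun i => by rw [(hμnull i).measure_singleton x, mul_zero]
  · rw [hν _ hC.closed.isOpen_compl.measurableSet]
    refine ENNReal.tsum_eq_zero.2 fun i => ?_
    rw [measure_mono_null (compl_subset_compl.2 (closure_minimal inter_subset_right hC.closed))
      (hμC i), mul_zero]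
  · obtain ⟨v, hvB, hxv, hvU⟩ := hB.exists_closure_subset (hU.mem_nhds hxU)
    let i : ι := ⟨v, hvB, x, hxv, hxC⟩
    have := hμprob i
    have hμU : μ i U = 1 := (prob_compl_eq_zero_iff hU.measurableSet).1 <|
      measure_mono_null (compl_subset_compl.2 ((closure_mono inter_subset_left).trans hvU))
        (hμC i)
    calc 0 < w i := hw0 i
      _ = (w i • μ i) U := by rw [Measure.smul_apply, hμU, smul_eq_mul, mul_one]
      _ ≤ ν U := Measure.le_iff'.1 (Measure.le_sum _ i) U

end AtomlessMeasure

theorem measureReal_Iic_add_Ioc {α : Type*} [LinearOrder α] [TopologicalSpace α]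
    [OrderClosedTopology α] [MeasurableSpace α] [OpensMeasurableSpace α] (μ : Measure α)
    [IsFiniteMeasure μ] {a b : α} (hab : a ≤ b) :
    μ.real (Iic a) + μ.real (Ioc a b) = μ.real (Iic b) := by
  rw [← measureReal_union (Iic_disjoint_Ioc le_rfl) measurableSet_Ioc, Iic_union_Ioc_eq_Iic hab]

theorem continuous_measureReal_Iic (μ : Measure ℝ) [IsFiniteMeasure μ] [NullSingletonClass μ] :
    Continuous fun t => μ.real (Iic t) := by
  have hmono : Monotone fun t => μ.real (Iic t) := fun _ _ h =>
    measureReal_mono (Iic_subset_Iic.2 h)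
  refine Metric.continuous_iff.2 fun t ε hε => ?_
  have hsmall : Tendsto (fun δ => μ.real (Icc (t - δ) (t + δ))) (𝓝 0) (𝓝 0) :=
    (ENNReal.tendsto_toReal ENNReal.zero_ne_top).comp (tendsto_measure_Icc μ t)
  obtain ⟨δ, hδ, hδε⟩ := (hsmall.eventually (gt_mem_nhds hε)).exists_gt
  refine ⟨δ, hδ, fun s hs => ?_⟩
  have hIcc {x : ℝ} (hx : x ∈ Icc (t - δ) (t + δ)) :
      μ.real (Iic x) ∈ Icc (μ.real (Iic (t - δ))) (μ.real (Iic (t + δ))) :=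
    ⟨hmono hx.1, hmono hx.2⟩
  have hs' : s ∈ Icc (t - δ) (t + δ) :=
    Real.closedBall_eq_Icc ▸ Metric.ball_subset_closedBall hs
  calc dist (μ.real (Iic s)) (μ.real (Iic t))
      ≤ μ.real (Iic (t + δ)) - μ.real (Iic (t - δ)) :=
        Real.dist_le_of_mem_Icc (hIcc hs') (hIcc ⟨by linarith, by linarith⟩)
    _ = μ.real (Ioc (t - δ) (t + δ)) := by
        rw [← measureReal_Iic_add_Ioc μ (by linarith : t - δ ≤ t + δ), add_sub_cancel_left]
    _ ≤ μ.real (Icc (t - δ) (t + δ)) := measureReal_mono Ioc_subset_Icc_self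
    _ < ε := hδε

theorem exists_isEmbedding_comp_eq {K Y Z : Type*} [TopologicalSpace K] [CompactSpace K]
    [TopologicalSpace Y] [T2Space Y] [TopologicalSpace Z] [T2Space Z] {π : K → Y} {f : K → Z}
    (hπ : Continuous π) (hπs : Function.Surjective π) (hf : Continuous f)
    (hfib : ∀ a b, π a = π b ↔ f a = f b) :
    ∃ g : Y → Z, IsEmbedding g ∧ g ∘ π = f := by
  set g := f ∘ Function.surjInv hπs
  have hgπ : g ∘ π = f := funext fun a => (hfib _ a).1 (Function.surjInv_eq hπs (π a))
  have : CompactSpace Y := hπs.compactSpace hπ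
  refine ⟨g, (Continuous.isClosedEmbedding ?_ fun y₁ y₂ h => ?_).isEmbedding, hgπ⟩
  · exact ((hπ.isClosedMap.isQuotientMap hπ hπs).continuous_iff).2 (hgπ ▸ hf)
  · rw [← Function.surjInv_eq hπs y₁, ← Function.surjInv_eq hπs y₂]
    exact (hfib _ _).2 h

namespace unitInterval

theorem continuous_measureReal_Iic (ν : Measure I) [IsFiniteMeasure ν] [NullSingletonClass ν] :
    Continuous fun t => ν.real (Iic t) := by
  have : NullSingletonClass (ν.map Subtype.val) := ⟨fun r => by
    rw [Measure.map_apply measurable_subtype_coe (measurableSet_singleton r)]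
    exact Set.Subsingleton.measure_zero
      (fun a ha b hb => Subtype.val_injective (ha.trans hb.symm)) ν⟩
  have h : (fun t : I => ν.real (Iic t)) =
      (fun r : ℝ => (ν.map Subtype.val).real (Iic r)) ∘ Subtype.val := by
    ext t
    simp [map_measureReal_apply measurable_subtype_coe measurableSet_Iic]
  rw [h]
  exact (_root_.continuous_measureReal_Iic _).comp continuous_subtype_val

variable {F : Set I} {ν : Measure I} [IsFiniteMeasure ν] [NullSingletonClass ν]

theorem measureReal_Iic_eq_iff (hνF : ν Fᶜ = 0)
    (hpos : ∀ U, IsOpen U → (U ∩ F).Nonempty → 0 < ν U) {s t : I} (hst : s ≤ t) :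
    ν.real (Iic s) = ν.real (Iic t) ↔ ∀ c, s < c → c < t → c ∉ F := by
  rw [← measureReal_Iic_add_Ioc ν hst, left_eq_add, measureReal_eq_zero_iff,
    measure_congr Ioo_ae_eq_Ioc.symm]
  refine ⟨fun h c hsc hct hc => (hpos _ isOpen_Ioo ⟨c, ⟨hsc, hct⟩, hc⟩).ne' h,
    fun h => measure_mono_null (fun c hc => h c hc.1 hc.2) hνF⟩

theorem exists_mem_measureReal_Iic_eq (hF : IsClosed F) (hne : F.Nonempty) (hνF : ν Fᶜ = 0)
    (hpos : ∀ U, IsOpen U → (U ∩ F).Nonempty → 0 < ν U) {y : ℝ}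
    (hy : y ∈ Icc 0 (ν.real univ)) : ∃ a ∈ F, ν.real (Iic a) = y := by
  have hrange : Icc (ν.real (Iic 0)) (ν.real (Iic 1)) ⊆ range fun t => ν.real (Iic t) :=
    intermediate_value_univ 0 1 (continuous_measureReal_Iic ν)
  have h0 : ν.real (Iic (0 : I)) = 0 := by
    rw [show Iic (0 : I) = {0} from Iic_bot, measureReal_def, measure_singleton,
      ENNReal.toReal_zero]
  have h1 : Iic (1 : I) = univ := Iic_top
  obtain ⟨r, rfl⟩ := hrange (by rwa [h0, h1])
  obtain ⟨a, ha, ⟨har, hgap⟩ | ⟨hra, hgap⟩⟩ := hF.exists_nearest_mem hne r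
  · exact ⟨a, ha, (measureReal_Iic_eq_iff hνF hpos har).2 hgap⟩
  · exact ⟨a, ha, ((measureReal_Iic_eq_iff hνF hpos hra).2 hgap).symm⟩

end unitInterval

theorem exists_isEmbedding_range_eq_image {X : Type*} [TopologicalSpace X] [T2Space X]
    {σ : unitInterval → X} (hσ : Continuous σ) {F : Set unitInterval} (hF : Perfect F)
    (hne : F.Nonempty) (hgap : AgreesOnGaps σ F)
    (hsep : ∀ a ∈ F, ∀ b ∈ F, σ a = σ b → ∀ c, a < c → c < b → c ∉ F) :
    ∃ g : unitInterval → X, IsEmbedding g ∧ range g = σ '' F := by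
  obtain ⟨ν, _, _, hνF, hpos⟩ := hF.exists_finiteMeasure_pos_of_isOpen
  set T := ν.real univ
  have hT : 0 < T := ENNReal.toReal_pos (hpos univ isOpen_univ (by simpa using hne)).ne'
    (measure_ne_top ν univ)
  let π : F → unitInterval := fun a =>
    ⟨ν.real (Iic a.1) / T, div_nonneg measureReal_nonneg hT.le,
      div_le_one_of_le₀ (measureReal_mono (subset_univ _)) hT.le⟩
  have hπ : Continuous π :=
    (((unitInterval.continuous_measureReal_Iic ν).comp continuous_subtype_val).div_const
      T).subtype_mk _
  have hπs : Function.Surjective π := fun y => by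
    obtain ⟨a, ha, hay⟩ := unitInterval.exists_mem_measureReal_Iic_eq hF.closed hne hνF hpos
      (y := y * T) ⟨mul_nonneg y.2.1 hT.le, mul_le_of_le_one_left hT.le y.2.2⟩
    exact ⟨⟨a, ha⟩, Subtype.ext (by simp [π, hay, hT.ne'])⟩
  have hfib (a b : F) : π a = π b ↔ σ a = σ b := by
    have hπ_iff : π a = π b ↔ ν.real (Iic a.1) = ν.real (Iic b.1) := by
      simp [π, Subtype.ext_iff, div_left_inj' hT.ne']
    rw [hπ_iff]
    rcases le_total a b with hab | hba
    · rw [unitInterval.measureReal_Iic_eq_iff hνF hpos hab]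
      exact ⟨hgap.eq_of_le a.2 b.2 hab, hsep a a.2 b b.2⟩
    · rw [eq_comm, unitInterval.measureReal_Iic_eq_iff hνF hpos hba, eq_comm]
      exact ⟨hgap.eq_of_le b.2 a.2 hba, hsep b b.2 a a.2⟩
  have : CompactSpace F := isCompact_iff_compactSpace.1 hF.closed.isCompact
  obtain ⟨g, hg, hgπ⟩ :=
    exists_isEmbedding_comp_eq hπ hπs (hσ.comp continuous_subtype_val) hfib
  refine ⟨g, hg, ?_⟩
  rw [← hπs.range_comp, hgπ, range_comp, Subtype.range_coe]

/-- For a topological path `σ` with distinct endpoints in a Hausdorff space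
there is a closed set `F ⊆ [0,1]` such that: both endpoints lie in `σ(F)`;
`σ` agrees on the two endpoints of any component of the complement of `F`;
`F` is minimal with these two properties; and `σ(F)` is an arc. -/
theorem exists_minimal_closed_arc_set
    {X : Type} [TopologicalSpace X] [T2Space X]
    (σ : unitInterval → X) (hσ : Continuous σ) (hne : σ 0 ≠ σ 1) :
    ∃ F : Set unitInterval, IsClosed F ∧
      (σ 0 ∈ σ '' F ∧ σ 1 ∈ σ '' F) ∧
      (∀ a ∈ F, ∀ b ∈ F, a < b → (∀ c, a < c → c < b → c ∉ F) → σ a = σ b) ∧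
      (∀ F' : Set unitInterval, F' ⊆ F → IsClosed F' →
        (σ 0 ∈ σ '' F' ∧ σ 1 ∈ σ '' F') →
        (∀ a ∈ F', ∀ b ∈ F', a < b → (∀ c, a < c → c < b → c ∉ F') → σ a = σ b) →
        F' = F) ∧
      (∃ g : unitInterval → X, Topology.IsEmbedding g ∧ Set.range g = σ '' F) := by
  obtain ⟨F, -, hF⟩ := (isAdmissible_univ σ 0 1).exists_minimal_subset hσ
  obtain ⟨hcl, h0, h1, hgap⟩ := hF.prop
  refine ⟨F, hcl, ⟨h0, h1⟩, hgap, fun F' hF'F hF'cl hF'01 hF'gap =>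
    hF.eq_of_subset ⟨hF'cl, hF'01.1, hF'01.2, hF'gap⟩ hF'F, ?_⟩
  exact exists_isEmbedding_range_eq_image hσ (hF.perfect hne) hF.prop.nonempty hgap
    fun a ha b hb => hF.notMem_of_eq ha hb
end

section
/- Let G be the double ray, i.e. the simple graph with vertex set ℤ in which two integers are adjacent if and only if they differ by 1, let r assign positive resistances to its edges with ∑_{n∈ℤ} r({n,n+1}) < ∞, and set p = 0 and q = 1. Then there exist two distinct flows of intensity 1 from p to q in this network, both of finite energy and both satisfying Kirchhoff's cycle law. (Consequently the cut-respecting hypothesis cannot be dropped from the uniqueness theorem for networks of finite total resistance.) -/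
open scoped ENNReal Classical

/-- The double ray: the simple graph on `ℤ` in which two integers are adjacent
iff they differ by `1`. -/
def doubleRay : SimpleGraph ℤ := SimpleGraph.fromRel (fun x y => y = x + 1)

/-!
The double ray is a tree, so Kirchhoff's cycle law holds vacuously. A flow on it is determined by
its values `a n` on the edges `n → n + 1`, and the node law only prescribes the differences
`a n - a (n - 1)`; hence adding a constant `c` to `a` (a current of strength `c` running through
the whole ray, closed "at infinity") gives another flow of the same intensity. Its energy
`∑ (a n + c)² r(n, n + 1)` stays finite because the total resistance is finite.
-/

namespace SimpleGraph

variable {α : Type*} [LinearOrder α]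

lemma Walk.mem_edges_of_covBy_of_le_of_lt {a b : α} (hab : a ⋖ b) :
    ∀ {x y : α} (p : (hasse α).Walk x y), x ≤ a → a < y → s(a, b) ∈ p.edges
  | _, _, .nil, hxa, hay => absurd hay hxa.not_gt
  | u, _, .cons (v := v) huv p, hua, hay => by
    rw [Walk.edges_cons, List.mem_cons]
    rcases le_or_gt v a with hva | hav
    · exact .inr (mem_edges_of_covBy_of_le_of_lt hab p hva hay)
    · have huv : u ⋖ v :=
        (hasse_adj.mp huv).resolve_right fun h => h.lt.not_ge (hua.trans hav.le)
      obtain rfl : u = a := hua.antisymm (not_lt.mp fun hu => huv.2 hu hav)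
      exact .inl (by rw [huv.unique_right hab])

theorem hasse_isAcyclic : (hasse α).IsAcyclic := by
  rw [isAcyclic_iff_forall_adj_isBridge]
  suffices h : ∀ a b : α, a ⋖ b → (hasse α).IsBridge s(a, b) by
    intro a b hab
    rcases hasse_adj.mp hab with hab | hba
    · exact h a b hab
    · exact Sym2.eq_swap ▸ h b a hba
  intro a b hab
  exact isBridge_iff_forall_walk_mem_edges.mpr fun p =>
    p.mem_edges_of_covBy_of_le_of_lt hab le_rfl hab.lt

end SimpleGraph

lemma doubleRay_eq_hasse : doubleRay = SimpleGraph.hasse ℤ := by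
  ext x y
  simp only [doubleRay, SimpleGraph.fromRel_adj, SimpleGraph.hasse_adj, Order.covBy_iff_add_one_eq]
  omega

lemma doubleRay_isAcyclic : doubleRay.IsAcyclic :=
  doubleRay_eq_hasse ▸ SimpleGraph.hasse_isAcyclic

lemma doubleRay_adj {x y : ℤ} : doubleRay.Adj x y ↔ y = x + 1 ∨ x = y + 1 := by
  rw [doubleRay, SimpleGraph.fromRel_adj]
  omega

lemma doubleRay_adj_add_one (n : ℤ) : doubleRay.Adj n (n + 1) := doubleRay_adj.mpr (.inl rfl)

lemma cycleLaw_of_isAcyclic {V : Type} {G : SimpleGraph V} (hG : G.IsAcyclic)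
    (r : Sym2 V → ℝ) (f : V → V → ℝ) : CycleLaw G r f :=
  fun _ c hc => (hG c hc).elim

noncomputable def doubleRayFlow (a : ℤ → ℝ) (x y : ℤ) : ℝ :=
  if y = x + 1 then a x else if x = y + 1 then -a y else 0

section doubleRayFlow

variable (a : ℤ → ℝ)

@[simp]
lemma doubleRayFlow_self_add_one (n : ℤ) : doubleRayFlow a n (n + 1) = a n := by
  simp [doubleRayFlow]

@[simp]
lemma doubleRayFlow_add_one_self (n : ℤ) : doubleRayFlow a (n + 1) n = -a n := by
  rw [doubleRayFlow, if_neg (by omega), if_pos rfl]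

lemma doubleRayFlow_antisymm (x y : ℤ) : doubleRayFlow a x y = -doubleRayFlow a y x := by
  unfold doubleRayFlow
  split_ifs <;> first | ring1 | omega

lemma doubleRayFlow_of_not_adj {x y : ℤ} (h : ¬doubleRay.Adj x y) : doubleRayFlow a x y = 0 := by
  rw [doubleRay_adj, not_or] at h
  simp [doubleRayFlow, h.1, h.2]

lemma hasSum_doubleRayFlow (x : ℤ) :
    HasSum (fun y : doubleRay.neighborSet x => doubleRayFlow a x y) (a x - a (x - 1)) := by
  have hsupp : Function.support (doubleRayFlow a x) ⊆ doubleRay.neighborSet x :=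
    fun y hy => by_contra fun h => hy (doubleRayFlow_of_not_adj a h)
  refine (hasSum_subtype_iff_of_support_subset hsupp).mpr ?_
  have hpair : HasSum (doubleRayFlow a x) (∑ y ∈ {x - 1, x + 1}, doubleRayFlow a x y) :=
    hasSum_sum_of_ne_finset_zero fun y hy => doubleRayFlow_of_not_adj a <| by
      simp only [Finset.mem_insert, Finset.mem_singleton] at hy
      rw [doubleRay_adj]
      omega
  have hleft : doubleRayFlow a x (x - 1) = -a (x - 1) := by
    simpa using doubleRayFlow_add_one_self a (x - 1)
  rwa [Finset.sum_pair (by omega), hleft, doubleRayFlow_self_add_one, neg_add_eq_sub] at hpair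

lemma isFlow_doubleRayFlow {p q : ℤ} {I : ℝ}
    (h : ∀ x, a x - a (x - 1) = if x = p then I else if x = q then -I else 0) :
    IsFlow doubleRay p q I (doubleRayFlow a) :=
  ⟨doubleRayFlow_antisymm a, fun _ _ => doubleRayFlow_of_not_adj a,
    -- `congr` reconciles the classical and the `Int` instances of `Decidable (x = q)`
    fun x => by convert hasSum_doubleRayFlow a x using 1; rw [h x]; congr⟩

end doubleRayFlow

lemma doubleRayFlow_injective : Function.Injective doubleRayFlow :=
  fun a b h => funext fun n => by simpa using congrFun (congrFun h n) (n + 1)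

def doubleRayDart : ℤ ⊕ ℤ → {e : ℤ × ℤ // doubleRay.Adj e.1 e.2}
  | .inl n => ⟨(n, n + 1), doubleRay_adj_add_one n⟩
  | .inr n => ⟨(n + 1, n), (doubleRay_adj_add_one n).symm⟩

lemma doubleRayDart_bijective : doubleRayDart.Bijective := by
  constructor
  · rintro (m | m) (n | n) h <;> simp only [doubleRayDart, Subtype.mk.injEq, Prod.mk.injEq] at h
      <;> simp only [Sum.inl.injEq, Sum.inr.injEq, reduceCtorEq] <;> omega
  · rintro ⟨⟨x, y⟩, hxy⟩
    rcases doubleRay_adj.mp hxy with h | h <;> dsimp only at h <;> subst h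
    exacts [⟨.inl x, rfl⟩, ⟨.inr y, rfl⟩]

lemma energy_doubleRayFlow (r : Sym2 ℤ → ℝ) (a : ℤ → ℝ) :
    energy doubleRay r (doubleRayFlow a) = ∑' n, ENNReal.ofReal (a n ^ 2 * r s(n, n + 1)) := by
  rw [energy, ← (Equiv.ofBijective _ doubleRayDart_bijective).tsum_eq,
    ENNReal.summable.tsum_sum ENNReal.summable]
  simp only [Equiv.ofBijective_apply, doubleRayDart, doubleRayFlow_self_add_one,
    doubleRayFlow_add_one_self, neg_sq, Sym2.eq_swap, ENNReal.add_div, ENNReal.add_halves]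

lemma energy_doubleRayFlow_lt_top {r : Sym2 ℤ → ℝ} (hr : ∀ n, 0 ≤ r s(n, n + 1))
    (hfin : Summable fun n : ℤ => r s(n, n + 1)) {a : ℤ → ℝ} {C : ℝ} (ha : ∀ n, |a n| ≤ C) :
    energy doubleRay r (doubleRayFlow a) < ⊤ := by
  have hsq (n : ℤ) : a n ^ 2 ≤ C ^ 2 :=
    sq_abs (a n) ▸ pow_le_pow_left₀ (abs_nonneg _) (ha n) 2
  have hsum : Summable fun n => a n ^ 2 * r s(n, n + 1) :=
    (hfin.mul_left (C ^ 2)).of_nonneg_of_le (fun n => mul_nonneg (sq_nonneg _) (hr n))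
      fun n => mul_le_mul_of_nonneg_right (hsq n) (hr n)
  rw [energy_doubleRayFlow,
    ← ENNReal.ofReal_tsum_of_nonneg (fun n => mul_nonneg (sq_nonneg _) (hr n)) hsum]
  exact ENNReal.ofReal_lt_top

/-- In the double ray with summable resistances there are two distinct flows of
intensity `1` from `0` to `1`, both of finite energy and both satisfying
Kirchhoff's cycle law.  Hence cut-respecting cannot be dropped from the
uniqueness theorem. -/
theorem doubleRay_two_flows (r : Sym2 ℤ → ℝ)
    (hr : ∀ e ∈ doubleRay.edgeSet, 0 < r e)
    (hfin : Summable fun n : ℤ => r s(n, n + 1)) :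
    ∃ f g : ℤ → ℤ → ℝ, f ≠ g ∧
      (IsFlow doubleRay 0 1 1 f ∧ energy doubleRay r f < ⊤ ∧
        CycleLaw doubleRay r f) ∧
      (IsFlow doubleRay 0 1 1 g ∧ energy doubleRay r g < ⊤ ∧
        CycleLaw doubleRay r g) := by
  -- the unit flow along the edge `{0, 1}`, plus a circulation of strength `c` through the whole ray
  let a (c : ℝ) (n : ℤ) : ℝ := if n = 0 then 1 + c else c
  have hflow (c : ℝ) : IsFlow doubleRay 0 1 1 (doubleRayFlow (a c)) :=
    isFlow_doubleRayFlow _ fun x => by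
      simp only [a]
      split_ifs <;> first | ring1 | (exfalso; omega)
  have henergy (c : ℝ) : energy doubleRay r (doubleRayFlow (a c)) < ⊤ :=
    energy_doubleRayFlow_lt_top (fun n => (hr _ (doubleRay_adj_add_one n)).le) hfin
      (C := 1 + |c|) fun n => by
        simp only [a]
        split_ifs
        · exact (abs_add_le 1 c).trans_eq (by rw [abs_one])
        · exact le_add_of_nonneg_left zero_le_one
  refine ⟨doubleRayFlow (a 0), doubleRayFlow (a (-1)), doubleRayFlow_injective.ne fun h => ?_,
    ⟨hflow 0, henergy 0, cycleLaw_of_isAcyclic doubleRay_isAcyclic r _⟩,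
    ⟨hflow (-1), henergy (-1), cycleLaw_of_isAcyclic doubleRay_isAcyclic r _⟩⟩
  simpa [a] using congrFun h 1
end

section
/- There exist a countable, connected, locally finite simple graph G, a function r assigning positive resistances to its edges with ∑_{e∈E} r(e) < ∞, and an antisymmetric function z : V × V → ℝ, not identically zero, vanishing on non-adjacent pairs, such that z satisfies Kirchhoff's node law at every vertex (the flows out of every vertex sum to 0), z is cut-respecting (for every set X of vertices such that only finitely many edges join X to V∖X, the net flow ∑_{xy∈E, x∈X, y∉X} z(x,y) equals 0), and z satisfies Kirchhoff's cycle law. (By the uniqueness theorem, any such z necessarily has infinite energy, so the finite-energy hypothesis cannot be dropped.) -/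
open scoped ENNReal Classical

/-! On the square lattice `ℤ²` let row `b` carry the constant current `2 ^ |b|` to the right and
let vertical edges carry nothing; the node law holds at every vertex. Give the edge with lower
corner `(a, b)` the resistance `2 ^ (-|a| - |b|)`, which is summable. On a horizontal edge of
column `a` the potential drop `z · r` is then `2 ^ (-|a|)`, the increment of a bounded potential
of the column alone, so the cycle law holds. Finally `ℤ²` has one end: a set with finitely many
boundary edges is finite or cofinite, and the net flow out of a finite set is the sum of the
node laws over it, hence zero. -/

open SimpleGraph

theorem Int.iff_of_forall_add_one_iff {P : ℤ → Prop} (h : ∀ a, P (a + 1) ↔ P a)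
    (a b : ℤ) : P a ↔ P b := by
  have hper : Function.Periodic P 1 := fun a => propext (h a)
  have ha := hper.int_mul_eq a
  have hb := hper.int_mul_eq b
  simp only [Int.cast_id, mul_one] at ha hb
  rw [ha, hb]

theorem Finset.sum_sum_eq_zero_of_antisymm {ι : Type*} {z : ι → ι → ℝ} (s : Finset ι)
    (hanti : ∀ x y, z x y = -z y x) :
    ∑ x ∈ s, ∑ y ∈ s, z x y = 0 := by
  have h : ∑ x ∈ s, ∑ y ∈ s, z x y = ∑ x ∈ s, ∑ y ∈ s, -z x y := by
    rw [Finset.sum_comm]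
    simp only [← hanti]
  simp only [Finset.sum_neg_distrib] at h
  linarith

namespace SimpleGraph

variable {V : Type} {G : SimpleGraph V}

theorem Walk.sum_darts_sub (φ : V → ℝ) {u v : V} (p : G.Walk u v) :
    (p.darts.map fun d => φ d.snd - φ d.fst).sum = φ v - φ u := by
  induction p with
  | nil => simp
  | cons h p ih =>
    rw [Walk.darts_cons, List.map_cons, List.sum_cons, ih]
    ring

theorem cycleLaw_of_potential {r : Sym2 V → ℝ} {z : V → V → ℝ} (φ : V → ℝ)
    (h : ∀ x y, G.Adj x y → z x y * r s(x, y) = φ y - φ x) : CycleLaw G r z := by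
  intro v c _
  rw [List.map_congr_left fun d _ => h d.fst d.snd d.adj, c.sum_darts_sub, sub_self]

def edgeBoundary (G : SimpleGraph V) (X : Set V) : Set (V × V) :=
  {e | e.1 ∈ X ∧ e.2 ∉ X ∧ G.Adj e.1 e.2}

theorem edgeBoundary_compl (X : Set V) :
    G.edgeBoundary Xᶜ = Prod.swap ⁻¹' G.edgeBoundary X := by
  ext ⟨x, y⟩
  simp only [edgeBoundary, Set.mem_ofPred_eq, Set.mem_preimage, Prod.fst_swap, Prod.snd_swap,
    Set.mem_compl_iff, not_not, G.adj_comm y x]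
  tauto

theorem mem_iff_mem_of_adj {X : Set V} {x y : V} (h : G.Adj x y)
    (hx : x ∉ Prod.fst '' G.edgeBoundary X ∪ Prod.snd '' G.edgeBoundary X) :
    x ∈ X ↔ y ∈ X := by
  by_cases hxX : x ∈ X <;> by_cases hyX : y ∈ X
  · exact iff_of_true hxX hyX
  · exact absurd (Or.inl ⟨(x, y), ⟨hxX, hyX, h⟩, rfl⟩) hx
  · exact absurd (Or.inr ⟨(y, x), ⟨hyX, hxX, h.symm⟩, rfl⟩) hx
  · exact iff_of_false hxX hyX

section Flow

variable {z : V → V → ℝ}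

theorem hasSum_neighborSet_iff (hsupp : ∀ x y, ¬G.Adj x y → z x y = 0) (x : V) {a : ℝ} :
    HasSum (fun y : G.neighborSet x => z x y) a ↔ HasSum (z x) a :=
  hasSum_subtype_iff_of_support_subset fun y hy => by_contra fun h => hy (hsupp x y h)

theorem sum_edgeBoundary_eq_zero_of_finite (hanti : ∀ x y, z x y = -z y x)
    (hsupp : ∀ x y, ¬G.Adj x y → z x y = 0) (hnode : ∀ x, HasSum (z x) 0)
    {X : Set V} (hX : X.Finite) (hB : (G.edgeBoundary X).Finite) :
    ∑ e ∈ hB.toFinset, z e.1 e.2 = 0 := by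
  set A := hX.toFinset
  set T := A ∪ hB.toFinset.image Prod.snd
  have hrow : ∀ x ∈ A, ∑ y ∈ T, z x y = 0 := by
    intro x hx
    refine ((hnode x).unique (hasSum_sum_of_ne_finset_zero fun y hy => ?_)).symm
    by_contra hxy
    have hyX : y ∉ X := fun h => hy (Finset.mem_union_left _ (hX.mem_toFinset.2 h))
    have hxy : (x, y) ∈ G.edgeBoundary X :=
      ⟨hX.mem_toFinset.1 hx, hyX, by_contra fun hadj => hxy (hsupp x y hadj)⟩
    exact hy (Finset.mem_union_right _ (Finset.mem_image.2 ⟨_, hB.mem_toFinset.2 hxy, rfl⟩))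
  have hcross : ∑ e ∈ hB.toFinset, z e.1 e.2 = ∑ e ∈ A ×ˢ (T \ A), z e.1 e.2 := by
    refine Finset.sum_subset (fun e he => ?_) fun e he heB => ?_
    · have he' := hB.mem_toFinset.1 he
      simp only [T, A, Finset.mem_product, Finset.mem_sdiff, Finset.mem_union, Finset.mem_image,
        Set.Finite.mem_toFinset]
      exact ⟨he'.1, Or.inr ⟨e, he', rfl⟩, he'.2.1⟩
    · simp only [T, A, Finset.mem_product, Finset.mem_sdiff, Set.Finite.mem_toFinset] at he heB
      exact hsupp _ _ fun hadj => heB ⟨he.1, he.2.2, hadj⟩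
  calc ∑ e ∈ hB.toFinset, z e.1 e.2 = ∑ e ∈ A ×ˢ (T \ A), z e.1 e.2 := hcross
    _ = ∑ x ∈ A, ∑ y ∈ T, z x y - ∑ x ∈ A, ∑ y ∈ A, z x y := by
      rw [Finset.sum_product, ← Finset.sum_sub_distrib]
      refine Finset.sum_congr rfl fun x _ => ?_
      rw [Finset.sum_sdiff_eq_sub Finset.subset_union_left]
    _ = 0 := by
      rw [Finset.sum_eq_zero hrow, Finset.sum_sum_eq_zero_of_antisymm A hanti, sub_zero]

theorem sum_edgeBoundary_eq_neg_sum_edgeBoundary_compl (hanti : ∀ x y, z x y = -z y x)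
    {X : Set V} (hB : (G.edgeBoundary X).Finite) (hBc : (G.edgeBoundary Xᶜ).Finite) :
    ∑ e ∈ hB.toFinset, z e.1 e.2 = -∑ e ∈ hBc.toFinset, z e.1 e.2 := by
  rw [← Finset.sum_neg_distrib]
  refine Finset.sum_nbij' Prod.swap Prod.swap (fun e he => ?_) (fun e he => ?_)
    (fun e _ => e.swap_swap) (fun e _ => e.swap_swap) fun e _ => hanti _ _
  · rw [Set.Finite.mem_toFinset, edgeBoundary_compl, Set.mem_preimage, Prod.swap_swap]
    exact hB.mem_toFinset.1 he
  · rw [Set.Finite.mem_toFinset, ← Set.mem_preimage, ← edgeBoundary_compl]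
    exact hBc.mem_toFinset.1 he

theorem sum_edgeBoundary_eq_zero (hanti : ∀ x y, z x y = -z y x)
    (hsupp : ∀ x y, ¬G.Adj x y → z x y = 0) (hnode : ∀ x, HasSum (z x) 0)
    {X : Set V} (hX : X.Finite ∨ Xᶜ.Finite) (hB : (G.edgeBoundary X).Finite) :
    ∑ e ∈ hB.toFinset, z e.1 e.2 = 0 := by
  rcases hX with hX | hXc
  · exact sum_edgeBoundary_eq_zero_of_finite hanti hsupp hnode hX hB
  · have hBc : (G.edgeBoundary Xᶜ).Finite :=
      edgeBoundary_compl X ▸ hB.preimage Prod.swap_injective.injOn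
    rw [sum_edgeBoundary_eq_neg_sum_edgeBoundary_compl hanti hB hBc,
      sum_edgeBoundary_eq_zero_of_finite hanti hsupp hnode hXc hBc, neg_zero]

end Flow

end SimpleGraph

namespace SquareGrid

noncomputable abbrev graph : SimpleGraph (ℤ × ℤ) := hasse ℤ □ hasse ℤ

theorem hasse_int_adj {a b : ℤ} : (hasse ℤ).Adj a b ↔ b = a + 1 ∨ a = b + 1 := by
  simp only [hasse_adj, Order.covBy_iff_add_one_eq, eq_comm]

theorem adj_iff {x y : ℤ × ℤ} : graph.Adj x y ↔
    (y.1 = x.1 + 1 ∨ x.1 = y.1 + 1) ∧ x.2 = y.2 ∨ (y.2 = x.2 + 1 ∨ x.2 = y.2 + 1) ∧ x.1 = y.1 := by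
  rw [boxProd_adj, hasse_int_adj, hasse_int_adj]

theorem adj_right (x : ℤ × ℤ) : graph.Adj x (x.1 + 1, x.2) :=
  adj_iff.2 (Or.inl ⟨Or.inl rfl, rfl⟩)

theorem adj_left (x : ℤ × ℤ) : graph.Adj x (x.1 - 1, x.2) :=
  adj_iff.2 (Or.inl ⟨Or.inr (sub_add_cancel _ _).symm, rfl⟩)

theorem adj_up (x : ℤ × ℤ) : graph.Adj x (x.1, x.2 + 1) :=
  adj_iff.2 (Or.inr ⟨Or.inl rfl, rfl⟩)

theorem connected : graph.Connected :=
  have h : (hasse ℤ).Connected := ⟨hasse_preconnected_of_succ ℤ⟩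
  h.boxProd h

theorem hasse_int_neighborSet (a : ℤ) : (hasse ℤ).neighborSet a = {a + 1, a - 1} := by
  ext b
  simp only [mem_neighborSet, hasse_int_adj, Set.mem_insert_iff, Set.mem_singleton_iff]
  omega

theorem neighborSet_finite (x : ℤ × ℤ) : (graph.neighborSet x).Finite := by
  rw [neighborSet_boxProd, hasse_int_neighborSet, hasse_int_neighborSet]
  exact Set.toFinite _

theorem mem_iff_mem_corner_of_notMem_Icc {X : Set (ℤ × ℤ)} {lo hi : ℤ × ℤ}
    (hX : ∀ x y, graph.Adj x y → x ∉ Set.Icc lo hi → (x ∈ X ↔ y ∈ X))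
    {p : ℤ × ℤ} (hp : p ∉ Set.Icc lo hi) : p ∈ X ↔ (hi.1 + 1, hi.2 + 1) ∈ X := by
  have row : ∀ b ∉ Set.Icc lo.2 hi.2, ∀ a a', (a, b) ∈ X ↔ (a', b) ∈ X := fun b hb =>
    Int.iff_of_forall_add_one_iff fun a =>
      (hX (a, b) _ (adj_right (a, b)) fun h => hb ⟨h.1.2, h.2.2⟩).symm
  have col : ∀ a ∉ Set.Icc lo.1 hi.1, ∀ b b', (a, b) ∈ X ↔ (a, b') ∈ X := fun a ha =>
    Int.iff_of_forall_add_one_iff fun b =>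
      (hX (a, b) _ (adj_up (a, b)) fun h => ha ⟨h.1.1, h.2.1⟩).symm
  have hi1 : hi.1 + 1 ∉ Set.Icc lo.1 hi.1 := fun h => by linarith [h.2]
  have hi2 : hi.2 + 1 ∉ Set.Icc lo.2 hi.2 := fun h => by linarith [h.2]
  by_cases hp2 : p.2 ∈ Set.Icc lo.2 hi.2
  · have hp1 : p.1 ∉ Set.Icc lo.1 hi.1 := fun hp1 => hp ⟨⟨hp1.1, hp2.1⟩, hp1.2, hp2.2⟩
    exact (col p.1 hp1 p.2 _).trans (row _ hi2 _ _)
  · exact (row p.2 hp2 p.1 _).trans (col _ hi1 _ _)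

theorem finite_or_compl_finite_of_edgeBoundary_finite {X : Set (ℤ × ℤ)}
    (hB : (graph.edgeBoundary X).Finite) : X.Finite ∨ Xᶜ.Finite := by
  have hS := (hB.image Prod.fst).union (hB.image Prod.snd)
  obtain ⟨lo, hi, hS⟩ := bddBelow_bddAbove_iff_subset_Icc.1 ⟨hS.bddBelow, hS.bddAbove⟩
  have hmem : ∀ p ∉ Set.Icc lo hi, p ∈ X ↔ (hi.1 + 1, hi.2 + 1) ∈ X := fun p =>
    mem_iff_mem_corner_of_notMem_Icc fun x y hxy hx => mem_iff_mem_of_adj hxy fun h => hx (hS h)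
  by_cases hc : (hi.1 + 1, hi.2 + 1) ∈ X
  · exact Or.inr <| (Set.finite_Icc lo hi).subset fun p hp => by_contra fun h => hp ((hmem p h).2 hc)
  · exact Or.inl <| (Set.finite_Icc lo hi).subset fun p hp => by_contra fun h => hc ((hmem p h).1 hp)

/-- `y.1 - x.1` is `±1` on horizontal edges and `0` on vertical ones. -/
noncomputable def flow (x y : ℤ × ℤ) : ℝ :=
  if graph.Adj x y then ((y.1 - x.1 : ℤ) : ℝ) * 2 ^ x.2.natAbs else 0

theorem flow_antisymm (x y : ℤ × ℤ) : flow x y = -flow y x := by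
  unfold flow
  by_cases h : graph.Adj x y
  · rw [if_pos h, if_pos h.symm]
    rcases adj_iff.1 h with ⟨-, h2⟩ | ⟨-, h1⟩
    · rw [h2]; push_cast; ring
    · rw [h1]; simp
  · rw [if_neg h, if_neg fun h' => h h'.symm, neg_zero]

theorem flow_eq_zero_of_not_adj (x y : ℤ × ℤ) (h : ¬graph.Adj x y) : flow x y = 0 :=
  if_neg h

theorem flow_right (x : ℤ × ℤ) : flow x (x.1 + 1, x.2) = 2 ^ x.2.natAbs := by
  rw [flow, if_pos (adj_right x)]
  simp

theorem flow_left (x : ℤ × ℤ) : flow x (x.1 - 1, x.2) = -2 ^ x.2.natAbs := by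
  rw [flow, if_pos (adj_left x)]
  simp

theorem hasSum_flow (x : ℤ × ℤ) : HasSum (flow x) 0 := by
  have hsupp : ∀ y ∉ ({(x.1 + 1, x.2), (x.1 - 1, x.2)} : Finset (ℤ × ℤ)), flow x y = 0 := by
    intro y hy
    by_cases h : graph.Adj x y
    · rw [flow, if_pos h]
      simp only [Finset.mem_insert, Finset.mem_singleton, Prod.ext_iff] at hy
      rcases adj_iff.1 h with hhor | ⟨-, h1⟩
      · omega
      · simp [h1]
    · exact flow_eq_zero_of_not_adj x y h
  have hne : (x.1 + 1, x.2) ≠ (x.1 - 1, x.2) := by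
    rw [Ne, Prod.mk.injEq]
    omega
  simpa [Finset.sum_pair hne, flow_right, flow_left] using hasSum_sum_of_ne_finset_zero hsupp

noncomputable def decay (n : ℤ) : ℝ := 2⁻¹ ^ n.natAbs

theorem decay_pos (n : ℤ) : 0 < decay n := by
  unfold decay
  positivity

theorem summable_decay : Summable decay := by
  have h : Summable fun n : ℕ => (2⁻¹ : ℝ) ^ n :=
    summable_geometric_of_lt_one (by norm_num) (by norm_num)
  exact .of_nat_of_neg (by simpa [decay] using h) (by simpa [decay] using h)

theorem two_pow_mul_decay (n : ℤ) : 2 ^ n.natAbs * decay n = 1 := by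
  rw [decay, ← mul_pow, mul_inv_cancel₀ two_ne_zero, one_pow]

noncomputable def potential (n : ℤ) : ℝ :=
  if 0 ≤ n then 3 - 2 * decay n else decay n

theorem potential_add_one_sub (n : ℤ) : potential (n + 1) - potential n = decay n := by
  rcases le_or_gt 0 n with hn | hn
  · have habs : (n + 1).natAbs = n.natAbs + 1 := by omega
    rw [potential, potential, if_pos (by omega), if_pos hn, decay, decay, habs, pow_succ]
    ring
  obtain rfl | hn := (show n = -1 ∨ n ≤ -2 by omega)
  · norm_num [potential, decay]
  · have habs : n.natAbs = (n + 1).natAbs + 1 := by omega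
    rw [potential, potential, if_neg (by omega), if_neg (by omega), decay, decay, habs, pow_succ]
    ring

noncomputable def lowerCorner : Sym2 (ℤ × ℤ) → ℤ × ℤ :=
  Sym2.lift ⟨(· ⊓ ·), inf_comm⟩

noncomputable def resistance (e : Sym2 (ℤ × ℤ)) : ℝ :=
  decay (lowerCorner e).1 * decay (lowerCorner e).2

theorem resistance_pos (e : Sym2 (ℤ × ℤ)) : 0 < resistance e :=
  mul_pos (decay_pos _) (decay_pos _)

theorem flow_mul_resistance {x y : ℤ × ℤ} (h : graph.Adj x y) :
    flow x y * resistance s(x, y) = potential y.1 - potential x.1 := by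
  have hr : resistance s(x, y) = decay (min x.1 y.1) * decay (min x.2 y.2) := rfl
  rw [flow, if_pos h, hr]
  rcases adj_iff.1 h with ⟨h1 | h1, h2⟩ | ⟨-, h1⟩
  · rw [h1, ← h2, min_eq_left (by omega), min_self]
    push_cast
    linear_combination decay x.1 * two_pow_mul_decay x.2 - potential_add_one_sub x.1
  · rw [h1, h2, min_eq_right (by omega), min_self]
    push_cast
    linear_combination -decay y.1 * two_pow_mul_decay y.2 + potential_add_one_sub y.1
  · simp [h1]

noncomputable def isHorizontal : Sym2 (ℤ × ℤ) → Bool :=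
  Sym2.lift ⟨fun x y => decide (x.2 = y.2), fun x y => by simp only [eq_comm]⟩

theorem injOn_lowerCorner_isHorizontal :
    Set.InjOn (fun e => (lowerCorner e, isHorizontal e)) graph.edgeSet := by
  have hdecode : ∀ e ∈ graph.edgeSet,
      e = s(lowerCorner e, lowerCorner e + if isHorizontal e then (1, 0) else (0, 1)) := by
    intro e he
    induction e using Sym2.ind with
    | _ x y =>
      rcases adj_iff.1 he with ⟨h1 | h1, h2⟩ | ⟨h1 | h1, h2⟩
      all_goals simp_all [lowerCorner, isHorizontal, Prod.ext_iff, Prod.le_def]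
  intro e he e' he' h
  simp only [Prod.mk.injEq] at h
  rw [hdecode e he, hdecode e' he', h.1, h.2]

theorem summable_resistance : Summable fun e : graph.edgeSet => resistance e := by
  have h0 : 0 ≤ decay := fun n => (decay_pos n).le
  have hg : Summable fun c : (ℤ × ℤ) × Bool => decay c.1.1 * decay c.1.2 * 1 :=
    (summable_decay.mul_of_nonneg summable_decay h0 h0).mul_of_nonneg
      (Summable.of_finite (f := fun _ : Bool => (1 : ℝ)))
      (fun p => mul_nonneg (h0 p.1) (h0 p.2)) fun _ => zero_le_one
  simp only [mul_one] at hg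
  exact (hg.comp_injective injOn_lowerCorner_isHorizontal.injective :)

end SquareGrid

/-- There is a countable connected locally finite graph with summable positive
resistances carrying a nonzero antisymmetric function supported on edges that
satisfies Kirchhoff's node law everywhere, is cut-respecting (across every
finite cut) and satisfies Kirchhoff's cycle law.  (Necessarily of infinite
energy.) -/
theorem exists_nonzero_cutRespecting_circulation :
    ∃ (V : Type) (_ : Countable V) (G : SimpleGraph V) (r : Sym2 V → ℝ)
      (z : V → V → ℝ),
      G.Connected ∧ (∀ v : V, (G.neighborSet v).Finite) ∧
      (∀ e ∈ G.edgeSet, 0 < r e) ∧ (Summable fun e : G.edgeSet => r e.1) ∧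
      (∀ x y, z x y = - z y x) ∧ (∀ x y, ¬ G.Adj x y → z x y = 0) ∧
      (∃ x y, z x y ≠ 0) ∧
      (∀ x : V, HasSum (fun y : G.neighborSet x => z x y) 0) ∧
      (∀ X : Set V, ∀ hX : {e : V × V | e.1 ∈ X ∧ e.2 ∉ X ∧ G.Adj e.1 e.2}.Finite,
        ∑ e ∈ hX.toFinset, z e.1 e.2 = 0) ∧
      CycleLaw G r z := by
  open SquareGrid in
  exact ⟨ℤ × ℤ, inferInstance, graph, resistance, flow, connected, neighborSet_finite,
    fun e _ => resistance_pos e, summable_resistance, flow_antisymm, flow_eq_zero_of_not_adj,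
    ⟨_, _, (flow_right (0, 0)).trans_ne (pow_ne_zero _ two_ne_zero)⟩,
    fun x => (hasSum_neighborSet_iff flow_eq_zero_of_not_adj x).2 (hasSum_flow x),
    fun X hB => sum_edgeBoundary_eq_zero flow_antisymm flow_eq_zero_of_not_adj hasSum_flow
      (finite_or_compl_finite_of_edgeBoundary_finite hB) hB,
    cycleLaw_of_potential (fun x => potential x.1) fun _ _ => flow_mul_resistance⟩
end

section
/- Let G be the simple graph with vertex set {p, u, v, q} ∪ {w_n : n ∈ ℕ} whose edges are pu, vq, and uw_n and w_nv for every n ∈ ℕ, and let every edge have resistance 1. Then no flow of intensity 1 from p to q exists in this network that satisfies Kirchhoff's cycle law. (Hence non-locally-finite networks need not admit any flow satisfying Kirchhoff's cycle law.) -/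
open scoped ENNReal Classical

/-- The vertices of the fan graph: `p`, `u`, `v`, `q` and infinitely many
middle vertices `w n`. -/
inductive FanV : Type
  | p | u | v | q
  | w (n : ℕ)

/-- The generating relation of the fan graph: edges `pu`, `vq`, `u wₙ`, `wₙ v`. -/
def fanRel : FanV → FanV → Prop
  | .p, .u => True
  | .v, .q => True
  | .u, .w _ => True
  | .w _, .v => True
  | _, _ => False

/-- The fan graph: two edges `pu`, `vq` and infinitely many disjoint
`u`–`v` paths of length two. -/
def fanGraph : SimpleGraph FanV := SimpleGraph.fromRel fanRel


/-!
Along each middle path `u wₙ v` the node law at `wₙ` makes the current constant, so the cycle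
law on `u wₘ v wₙ u` forces all the currents `f(u, wₙ)` to be equal. The node law at `u` requires
them to be summable over infinitely many `n`, hence all zero; then the node law at `u` leaves
`f(u, p) = 0`, while the node law at `p` gives `f(p, u) = 1`.
-/

section Flow

variable {V : Type} {G : SimpleGraph V} {p q : V} {I : ℝ} {f : V → V → ℝ}

theorem IsFlow.hasSum (hf : IsFlow G p q I f) (x : V) :
    HasSum (f x) (if x = p then I else if x = q then -I else 0) := by
  have h := hf.2.2 x
  rw [← Function.comp_def, hasSum_subtype_iff_indicator] at h
  rwa [Set.indicator_eq_self.mpr] at h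
  exact Function.support_subset_iff'.mpr fun y hy => hf.2.1 x y hy

theorem IsFlow.sum_eq (hf : IsFlow G p q I f) (x : V) (s : Finset V)
    (hs : ∀ y ∉ s, G.Adj x y → f x y = 0) :
    ∑ y ∈ s, f x y = if x = p then I else if x = q then -I else 0 :=
  (hasSum_sum_of_ne_finset_zero fun y hy =>
    if hxy : G.Adj x y then hs y hy hxy else hf.2.1 x y hxy).unique (hf.hasSum x)

theorem IsFlow.eq_zero_of_forall_eq_const (hf : IsFlow G p q I f) {x : V} {g : ℕ → V}
    (hg : Function.Injective g) {c : ℝ} (hc : ∀ n, f x (g n) = c) : c = 0 := by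
  have hsum : Summable fun _ : ℕ => c := by
    simpa only [Function.comp_def, hc] using (hf.hasSum x).summable.comp_injective hg
  exact (summable_const_iff c).mp hsum

end Flow

namespace fanGraph

open SimpleGraph

theorem adj_u_w (n : ℕ) : fanGraph.Adj .u (.w n) := by simp [fanGraph, fanRel]

theorem adj_w_v (n : ℕ) : fanGraph.Adj (.w n) .v := by simp [fanGraph, fanRel]

theorem eq_u_of_adj_p {y : FanV} (hy : fanGraph.Adj .p y) : y = .u := by
  cases y <;> simp_all [fanGraph, fanRel]

theorem eq_p_or_w_of_adj_u {y : FanV} (hy : fanGraph.Adj .u y) : y = .p ∨ ∃ n, y = .w n := by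
  cases y <;> simp_all [fanGraph, fanRel]

theorem eq_u_or_v_of_adj_w {n : ℕ} {y : FanV} (hy : fanGraph.Adj (.w n) y) :
    y = .u ∨ y = .v := by
  cases y <;> simp_all [fanGraph, fanRel]

def cycle (m n : ℕ) : fanGraph.Walk .u .u :=
  .cons (adj_u_w m) (.cons (adj_w_v m) (.cons (adj_w_v n).symm (.cons (adj_u_w n).symm .nil)))

theorem cycle_isCycle {m n : ℕ} (hmn : m ≠ n) : (cycle m n).IsCycle := by
  rw [Walk.isCycle_def, Walk.isTrail_def]
  refine ⟨?_, by simp [cycle], ?_⟩ <;> simp [cycle, Sym2.eq, Sym2.rel_iff', hmn]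

end fanGraph

section FanFlow

open SimpleGraph fanGraph

variable {I : ℝ} {f : FanV → FanV → ℝ}

theorem IsFlow.fan_apply_p_u (hf : IsFlow fanGraph .p .q I f) : f .p .u = I := by
  simpa using hf.sum_eq .p {.u} fun y hy hpy => absurd (eq_u_of_adj_p hpy) (by simpa using hy)

theorem IsFlow.fan_apply_w_v (hf : IsFlow fanGraph .p .q I f) (n : ℕ) : f (.w n) .v = f .u (.w n) := by
  have h := hf.sum_eq (.w n) {.u, .v} fun y hy hwy => by
    rcases eq_u_or_v_of_adj_w hwy with rfl | rfl <;> simp at hy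
  rw [Finset.sum_pair (by simp), hf.1 (.w n) .u] at h
  simp only [reduceCtorEq, if_false] at h
  linarith

theorem IsFlow.fan_apply_u_w_eq (hf : IsFlow fanGraph .p .q I f)
    (hcl : CycleLaw fanGraph (fun _ => 1) f) (m n : ℕ) : f .u (.w m) = f .u (.w n) := by
  rcases eq_or_ne m n with rfl | hmn
  · rfl
  have h := hcl .u (cycle m n) (cycle_isCycle hmn)
  simp only [cycle, Walk.darts_cons, Walk.darts_nil, List.map_cons, List.map_nil, List.sum_cons,
    List.sum_nil, mul_one, add_zero] at h
  rw [hf.fan_apply_w_v m, hf.1 .v, hf.fan_apply_w_v n, hf.1 (.w n)] at h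
  linarith

end FanFlow

/-- In the fan network with unit resistances there is no flow of intensity `1`
from `p` to `q` satisfying Kirchhoff's cycle law. -/
theorem fan_no_flow_with_cycleLaw :
    ¬ ∃ f : FanV → FanV → ℝ,
        IsFlow fanGraph FanV.p FanV.q 1 f ∧
        CycleLaw fanGraph (fun _ => (1 : ℝ)) f := by
  rintro ⟨f, hf, hcl⟩
  have hw : ∀ n, f .u (.w n) = 0 := fun n =>
    hf.eq_zero_of_forall_eq_const (g := FanV.w) (fun _ _ => FanV.w.inj)
      fun k => hf.fan_apply_u_w_eq hcl k n
  have hu : f .u .p = 0 := by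
    simpa using hf.sum_eq .u {.p} fun y hy huy => by
      rcases fanGraph.eq_p_or_w_of_adj_u huy with rfl | ⟨n, rfl⟩
      · simp at hy
      · exact hw n
  linarith [hf.1 .u .p, hf.fan_apply_p_u]
end

section
/- Let G be a countable, connected, locally finite simple graph that has exactly one end. Then in any network (G,r,p,q,I) on G, every flow of intensity I from p to q is cut-respecting: for every set X of vertices with p,q ∈ X such that only finitely many edges join X to V∖X, one has ∑_{xy∈E, x∈X, y∉X} f(x,y) = 0. -/
open scoped ENNReal Classical

/-!
If `X` has a finite edge boundary, removing the finitely many boundary vertices leaves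
components each lying inside `X` or inside its complement. In a one-ended graph at most one
of them is infinite, so `X` or its complement is finite. Summing Kirchhoff's node law over
that finite set, the flow along edges inside it cancels by antisymmetry, and what remains is
the net flow across the cut, equal to `I - I` or to `0`.
-/

section Flow

variable {V : Type} {G : SimpleGraph V} [G.LocallyFinite] {f : V → V → ℝ}

theorem sum_cut_eq_sum_sum_neighborFinset (hanti : ∀ x y, f x y = - f y x)
    (hzero : ∀ x y, ¬ G.Adj x y → f x y = 0) (S : Finset V) (B : Finset (V × V))
    (hB : ∀ e : V × V, e ∈ B ↔ e.1 ∈ S ∧ e.2 ∉ S ∧ G.Adj e.1 e.2) :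
    ∑ e ∈ B, f e.1 e.2 = ∑ x ∈ S, ∑ y ∈ G.neighborFinset x, f x y := by
  have hinner : ∑ x ∈ S, ∑ y ∈ S, f x y = 0 := by
    have hswap : ∑ x ∈ S, ∑ y ∈ S, f x y = ∑ y ∈ S, ∑ x ∈ S, -f y x :=
      Finset.sum_comm.trans <| Finset.sum_congr rfl fun y _ => Finset.sum_congr rfl fun x _ =>
        hanti x y
    simp only [Finset.sum_neg_distrib] at hswap
    linarith
  have hsplit (x : V) : ∑ y ∈ G.neighborFinset x, f x y =
      ∑ y ∈ S, f x y + ∑ y ∈ (G.neighborFinset x).filter (· ∉ S), f x y := by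
    rw [← Finset.sum_filter_add_sum_filter_not (G.neighborFinset x) (· ∈ S)]
    congr 1
    rw [← Finset.sum_filter_of_ne (s := S) (p := G.Adj x) fun y _ hy =>
      by_contra fun h => hy (hzero x y h)]
    exact Finset.sum_congr (by ext; simp [and_comm]) fun _ _ => rfl
  rw [Finset.sum_congr rfl fun x _ => hsplit x, Finset.sum_add_distrib, hinner, zero_add]
  exact Finset.sum_finset_product' _ _ _ fun e => by simp [hB, and_comm]

theorem IsFlow.sum_neighborFinset {p q : V} {I : ℝ} (hf : IsFlow G p q I f) (x : V) :
    ∑ y ∈ G.neighborFinset x, f x y = if x = p then I else if x = q then -I else 0 := by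
  rw [(hf.2.2 x).unique (hasSum_fintype _), ← Finset.sum_coe_sort]
  exact Fintype.sum_equiv (Equiv.subtypeEquivRight fun y => by simp) _ _ fun _ => rfl

theorem IsFlow.sum_cut_eq_zero {p q : V} {I : ℝ} (hf : IsFlow G p q I f) (hpq : p ≠ q)
    (S : Finset V) (hS : p ∈ S ↔ q ∈ S) (B : Finset (V × V))
    (hB : ∀ e : V × V, e ∈ B ↔ e.1 ∈ S ∧ e.2 ∉ S ∧ G.Adj e.1 e.2) :
    ∑ e ∈ B, f e.1 e.2 = 0 := by
  rw [sum_cut_eq_sum_sum_neighborFinset hf.1 hf.2.1 S B hB,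
    Finset.sum_congr rfl fun x _ => hf.sum_neighborFinset x]
  by_cases hp : p ∈ S
  · rw [← Finset.sum_subset (s₁ := {p, q}) (by simp [Finset.insert_subset_iff, hp, hS.1 hp])
      fun x _ hx => by simp_all, Finset.sum_pair hpq]
    simp [hpq.symm]
  · exact Finset.sum_eq_zero fun x hx => by
      rw [if_neg (by rintro rfl; exact hp hx), if_neg (by rintro rfl; exact hp (hS.2 hx))]

end Flow

namespace SimpleGraph

variable {V : Type} {G : SimpleGraph V}

open CategoryTheory in
theorem exists_end_eq_of_infinite [G.LocallyFinite] [Fact G.Preconnected] {K : Finset V}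
    (C : G.ComponentCompl K) (hC : C.supp.Infinite) :
    ∃ s ∈ G.end, s (Opposite.op K) = C := by
  have : Infinite V := hC.to_subtype.of_injective _ Subtype.val_injective
  set F := G.componentComplFunctor
  have hML : F.IsMittagLeffler :=
    F.isMittagLeffler_of_exists_finite_range fun j => ⟨j, 𝟙 j, Set.toFinite _⟩
  have : ∀ j, Nonempty (F.toEventualRanges.obj j) := F.toEventualRanges_nonempty hML
  obtain ⟨s, hs⟩ := F.toEventualRanges.eval_section_surjective_of_surjective
    (F.surjective_toEventualRanges hML) (Opposite.op K)
    ⟨C, (G.infinite_iff_in_eventualRange C).mp hC⟩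
  exact ⟨_, (F.toEventualRangesSectionsEquiv s).prop, congrArg Subtype.val hs⟩

theorem ComponentCompl.eq_of_infinite [G.LocallyFinite] [Fact G.Preconnected]
    (hend : G.end.Subsingleton) {K : Finset V} {C D : G.ComponentCompl K}
    (hC : C.supp.Infinite) (hD : D.supp.Infinite) : C = D := by
  obtain ⟨s, hs, rfl⟩ := exists_end_eq_of_infinite C hC
  obtain ⟨t, ht, rfl⟩ := exists_end_eq_of_infinite D hD
  rw [hend hs ht]

theorem ComponentCompl.exists_infinite_inter [G.LocallyFinite] [Fact G.Preconnected]
    (K : Finset V) {Y : Set V} (hY : Y.Infinite) :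
    ∃ C : G.ComponentCompl K, (C.supp ∩ Y).Infinite := by
  by_contra! hfin
  refine hY ((K.finite_toSet.union (Set.finite_iUnion hfin)).subset fun y hy => ?_)
  by_cases hyK : y ∈ K
  · exact Or.inl hyK
  · exact Or.inr (Set.mem_iUnion.mpr ⟨_, G.componentComplMk_mem hyK, hy⟩)

theorem ComponentCompl.exists_adj_mem_notMem {K : Set V} (C : G.ComponentCompl K) (X : Set V)
    {a b : V} (ha : a ∈ C.supp) (hb : b ∈ C.supp) (haX : a ∈ X) (hbX : b ∉ X) :
    ∃ x y, x ∉ K ∧ x ∈ X ∧ y ∉ X ∧ G.Adj x y := by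
  obtain ⟨haK, rfl⟩ := ha
  obtain ⟨hbK, hab⟩ := hb
  obtain ⟨w⟩ := ConnectedComponent.exact hab.symm
  obtain ⟨d, -, hd₁, hd₂⟩ := w.exists_boundary_dart (Subtype.val ⁻¹' X) haX hbX
  exact ⟨d.fst, d.snd, d.fst.prop, hd₁, hd₂, d.adj⟩

theorem finite_or_finite_compl_of_finite_cut [G.LocallyFinite] [Fact G.Preconnected]
    (hend : G.end.Subsingleton) {X : Set V}
    (hX : {e : V × V | e.1 ∈ X ∧ e.2 ∉ X ∧ G.Adj e.1 e.2}.Finite) :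
    X.Finite ∨ Xᶜ.Finite := by
  by_contra! hinf
  set K := hX.toFinset.image Prod.fst
  obtain ⟨C, hC⟩ := ComponentCompl.exists_infinite_inter (G := G) K hinf.1
  obtain ⟨D, hD⟩ := ComponentCompl.exists_infinite_inter (G := G) K hinf.2
  obtain rfl := ComponentCompl.eq_of_infinite hend (hC.mono Set.inter_subset_left)
    (hD.mono Set.inter_subset_left)
  obtain ⟨a, haC, haX⟩ := hC.nonempty
  obtain ⟨b, hbC, hbX⟩ := hD.nonempty
  obtain ⟨x, y, hxK, hxX, hyX, hxy⟩ := C.exists_adj_mem_notMem X haC hbC haX hbX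
  exact hxK (Finset.mem_image.mpr ⟨(x, y), hX.mem_toFinset.mpr ⟨hxX, hyX, hxy⟩, rfl⟩)

end SimpleGraph

open SimpleGraph in
theorem cutRespecting_of_one_end_general
    {V : Type} (G : SimpleGraph V) (hconn : G.Connected)
    (hlf : ∀ v : V, (G.neighborSet v).Finite)
    (hend : ∃! e, e ∈ G.end)
    (p q : V) (hpq : p ≠ q) (I : ℝ)
    (f : V → V → ℝ) (hf : IsFlow G p q I f) :
    CutRespecting G p q f := by
  have : G.LocallyFinite := fun v => (hlf v).fintype
  have : Fact G.Preconnected := ⟨hconn.preconnected⟩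
  intro X hp hq hX
  rcases finite_or_finite_compl_of_finite_cut (fun _ hs _ ht => hend.unique hs ht) hX with
    hXfin | hXcfin
  · exact hf.sum_cut_eq_zero hpq hXfin.toFinset (by simp [hp, hq]) _ (by simp)
  · have hreverse := hf.sum_cut_eq_zero hpq hXcfin.toFinset (by simp [hp, hq])
      (hX.toFinset.map (Equiv.prodComm V V).toEmbedding) fun e => by
        simp [Finset.mem_map_equiv, G.adj_comm, and_left_comm]
    rw [Finset.sum_map] at hreverse
    rw [Finset.sum_congr rfl fun e _ => hf.1 e.1 e.2, Finset.sum_neg_distrib]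
    simpa using hreverse

/-- In a countable connected locally finite graph with exactly one end, every
flow is cut-respecting. -/
theorem cutRespecting_of_one_end
    {V : Type} [Countable V] (G : SimpleGraph V) (hconn : G.Connected)
    (hlf : ∀ v : V, (G.neighborSet v).Finite)
    (hend : ∃! e, e ∈ G.end)
    (r : Sym2 V → ℝ) (hr : ∀ e ∈ G.edgeSet, 0 < r e)
    (p q : V) (hpq : p ≠ q) (I : ℝ)
    (f : V → V → ℝ) (hf : IsFlow G p q I f) :
    CutRespecting G p q f :=
  cutRespecting_of_one_end_general G hconn hlf hend p q hpq I f hf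
end

section
/- Let N=(G,r,p,q,I) be a network in which G is a countable, connected, locally finite simple graph, and let f be a flow of intensity I of finite energy that satisfies Kirchhoff's cycle law. Let R = q r_1 r_2 … be a ray (one-way infinite path) in G starting at q with ∑_{i≥0} r(r_i r_{i+1}) < ∞ (where r_0 = q). Then the series ∑_{i≥0} f(r_i, r_{i+1})·r(r_i r_{i+1}) converges absolutely. Moreover, if S = q s_1 s_2 … is another ray starting at q with ∑_{i≥0} r(s_i s_{i+1}) < ∞, and there exist paths P_1, P_2, … in G that are pairwise vertex-disjoint, where P_k joins the vertex r_{a_k} of R to the vertex s_{b_k} of S with a_1 < a_2 < … and b_1 < b_2 < …, meeting R and S only at these endpoints, and such that ∑_k ∑_{e ∈ E(P_k)} r(e) < ∞, then ∑_{i≥0} f(r_i, r_{i+1})·r(r_i r_{i+1}) = ∑_{i≥0} f(s_i, s_{i+1})·r(s_i s_{i+1}). -/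
open scoped ENNReal Classical

/-!
The potential drop `f(x,y) r(xy)` across an edge is at most `(f(x,y)² r(xy) + r(xy)) / 2` in
absolute value, so along a ray of finite resistance it is dominated by the energy of `f` plus the
resistance of the ray. By the cycle law the potential drops around any closed walk sum to zero:
bypassing repeated vertices splits a closed walk into cycles. Going out along `R` to `r_{a_k}`,
across `P_k` and back along `S` is such a closed walk, so the partial sums along `R` and `S` differ
by the potential drop along `P_k`. As the `P_k` are disjoint, their energies are summable, and
together with their summable resistances this forces the drop along `P_k` to zero.
-/

open Filter Topology Finset

namespace SimpleGraph.Walk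

variable {V : Type*} {G : SimpleGraph V}

def dartSum (g : V → V → ℝ) {u v : V} (p : G.Walk u v) : ℝ :=
  (p.darts.map fun d => g d.fst d.snd).sum

section dartSum

variable (g : V → V → ℝ)

@[simp] lemma dartSum_nil (v : V) : (nil : G.Walk v v).dartSum g = 0 := rfl

@[simp] lemma dartSum_cons {u v w : V} (h : G.Adj u v) (p : G.Walk v w) :
    (cons h p).dartSum g = g u v + p.dartSum g := by
  simp [dartSum]

@[simp] lemma dartSum_append {u v w : V} (p : G.Walk u v) (q : G.Walk v w) :
    (p.append q).dartSum g = p.dartSum g + q.dartSum g := by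
  simp [dartSum]

@[simp] lemma dartSum_copy {u v u' v' : V} (p : G.Walk u v) (hu : u = u') (hv : v = v') :
    (p.copy hu hv).dartSum g = p.dartSum g := by
  subst hu hv
  rfl

lemma dartSum_reverse (hg : ∀ x y, g x y = -g y x) {u v : V} (p : G.Walk u v) :
    p.reverse.dartSum g = -p.dartSum g := by
  induction p with
  | nil => simp
  | @cons u v w h p ih =>
    rw [reverse_cons, dartSum_append, ih, dartSum_cons, dartSum_cons, dartSum_nil, hg u v]
    ring

end dartSum

section CycleLaw

variable {g : V → V → ℝ} (hg : ∀ x y, g x y = -g y x)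
  (hcyc : ∀ (v : V) (c : G.Walk v v), c.IsCycle → c.dartSum g = 0)
include hg hcyc

lemma dartSum_cons_eq_zero_of_isPath {u w : V} (h : G.Adj u w) {p : G.Walk w u}
    (hp : p.IsPath) : (cons h p).dartSum g = 0 := by
  by_cases he : s(u, w) ∈ p.edges
  · -- a path from `w` back to `u` through the edge `uw` is that edge alone
    cases p with
    | nil => exact absurd h G.irrefl
    | @cons _ x _ h' p' =>
      rcases List.mem_cons.1 (edges_cons h' p' ▸ he) with he | he
      · obtain rfl : x = u := by
          rcases Sym2.eq_iff.1 he with ⟨rfl, -⟩ | ⟨rfl, -⟩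
          · exact absurd h G.irrefl
          · rfl
        obtain rfl := (isPath_iff_nil.1 ((cons_isPath_iff h' p').1 hp).1).eq_nil
        simp [hg w x]
      · exact absurd (p'.snd_mem_support_of_mem_edges he) ((cons_isPath_iff h' p').1 hp).2
  · exact hcyc _ _ ((cons_isCycle_iff p h).2 ⟨hp, he⟩)

lemma dartSum_bypass [DecidableEq V] {u v : V} (p : G.Walk u v) :
    p.bypass.dartSum g = p.dartSum g := by
  induction p with
  | nil => rfl
  | @cons u w v h p ih =>
    rw [bypass]
    split_ifs with hu
    · have hloop := dartSum_cons_eq_zero_of_isPath hg hcyc h (p.bypass_isPath.takeUntil hu)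
      have hsplit := congrArg (dartSum g) (p.bypass.take_spec hu)
      rw [dartSum_append] at hsplit
      rw [dartSum_cons] at hloop ⊢
      linarith
    · rw [dartSum_cons, dartSum_cons, ih]

lemma dartSum_eq_zero_of_closed {v : V} (c : G.Walk v v) : c.dartSum g = 0 := by
  rw [← dartSum_bypass hg hcyc, (isPath_iff_nil.1 c.bypass_isPath).eq_nil, dartSum_nil]

end CycleLaw

def ofSeq (R : ℕ → V) (hR : ∀ i, G.Adj (R i) (R (i + 1))) : ∀ n, G.Walk (R 0) (R n)
  | 0 => nil
  | n + 1 => (ofSeq R hR n).concat (hR n)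

lemma dartSum_ofSeq (g : V → V → ℝ) (R : ℕ → V) (hR : ∀ i, G.Adj (R i) (R (i + 1)))
    (n : ℕ) :
    (ofSeq R hR n).dartSum g = ∑ i ∈ range n, g (R i) (R (i + 1)) := by
  induction n with
  | zero => rfl
  | succ n ih => simp [ofSeq, concat_eq_append, ih, sum_range_succ]

theorem tsum_eq_of_linked {g : V → V → ℝ} (hg : ∀ x y, g x y = -g y x)
    (hclosed : ∀ (v : V) (c : G.Walk v v), c.dartSum g = 0)
    {R S : ℕ → V} (hR : ∀ i, G.Adj (R i) (R (i + 1))) (hS : ∀ i, G.Adj (S i) (S (i + 1)))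
    (h0 : R 0 = S 0) (hgR : Summable fun i => g (R i) (R (i + 1)))
    (hgS : Summable fun i => g (S i) (S (i + 1))) {a b : ℕ → ℕ}
    (ha : Tendsto a atTop atTop) (hb : Tendsto b atTop atTop)
    (P : ∀ k, G.Walk (R (a k)) (S (b k)))
    (hP : Tendsto (fun k => (P k).dartSum g) atTop (𝓝 0)) :
    ∑' i, g (R i) (R (i + 1)) = ∑' i, g (S i) (S (i + 1)) := by
  have hloop : ∀ k, ∑ i ∈ range (a k), g (R i) (R (i + 1)) + (P k).dartSum g =
      ∑ i ∈ range (b k), g (S i) (S (i + 1)) := by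
    intro k
    have := hclosed _ ((((ofSeq R hR (a k)).append (P k)).append
      (ofSeq S hS (b k)).reverse).copy rfl h0.symm)
    rw [dartSum_copy, dartSum_append, dartSum_append, dartSum_reverse g hg, dartSum_ofSeq,
      dartSum_ofSeq] at this
    linarith
  have hlim := (hgR.hasSum.tendsto_sum_nat.comp ha).add hP
  simp only [add_zero, Function.comp_def, hloop] at hlim
  exact tendsto_nhds_unique hlim (hgS.hasSum.tendsto_sum_nat.comp hb)

end SimpleGraph.Walk

open SimpleGraph Walk

section Energy

variable {V : Type} {G : SimpleGraph V} {r : Sym2 V → ℝ} {f : V → V → ℝ}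

lemma abs_mul_le_sq_mul_add_div_two (a : ℝ) {c : ℝ} (hc : 0 ≤ c) :
    |a * c| ≤ (a ^ 2 * c + c) / 2 := by
  rw [abs_mul, abs_of_nonneg hc]
  nlinarith [sq_nonneg (|a| - 1), sq_abs a]

lemma abs_dartSum_mul_le (hr : ∀ e ∈ G.edgeSet, 0 ≤ r e) {u v : V} (p : G.Walk u v) :
    |p.dartSum fun x y => f x y * r s(x, y)| ≤
      (p.dartSum (fun x y => f x y ^ 2 * r s(x, y)) + (p.edges.map r).sum) / 2 := by
  induction p with
  | nil => simp
  | @cons u v w h p ih =>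
    have hedge := abs_mul_le_sq_mul_add_div_two (f u v) (hr _ (G.mem_edgeSet.2 h))
    rw [dartSum_cons, dartSum_cons, edges_cons, List.map_cons, List.sum_cons]
    linarith [abs_add_le (f u v * r s(u, v)) (p.dartSum fun x y => f x y * r s(x, y))]

lemma summable_sq_mul_of_energy_lt_top (hr : ∀ e ∈ G.edgeSet, 0 ≤ r e)
    (hW : energy G r f < ⊤) :
    Summable fun e : {e : V × V // G.Adj e.1 e.2} => f e.1.1 e.1.2 ^ 2 * r s(e.1.1, e.1.2) := by
  have htop : ∑' e : {e : V × V // G.Adj e.1 e.2},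
      ENNReal.ofReal (f e.1.1 e.1.2 ^ 2 * r s(e.1.1, e.1.2)) ≠ ⊤ := by
    intro h
    simp [energy, h, ENNReal.top_div] at hW
  refine (ENNReal.summable_toReal htop).congr fun e => ENNReal.toReal_ofReal ?_
  exact mul_nonneg (sq_nonneg _) (hr _ (G.mem_edgeSet.2 e.2))

variable
  (hE : Summable fun e : {e : V × V // G.Adj e.1 e.2} => f e.1.1 e.1.2 ^ 2 * r s(e.1.1, e.1.2))
include hE

lemma summable_abs_mul_of_ray (hr : ∀ e ∈ G.edgeSet, 0 ≤ r e) {R : ℕ → V}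
    (hRinj : Function.Injective R) (hRadj : ∀ i, G.Adj (R i) (R (i + 1)))
    (hRfin : Summable fun i => r s(R i, R (i + 1))) :
    Summable fun i => |f (R i) (R (i + 1)) * r s(R i, R (i + 1))| := by
  let edge (i : ℕ) : {e : V × V // G.Adj e.1 e.2} := ⟨(R i, R (i + 1)), hRadj i⟩
  have hsq : Summable fun i => f (R i) (R (i + 1)) ^ 2 * r s(R i, R (i + 1)) :=
    hE.comp_injective (i := edge) fun i j hij => hRinj (congrArg (fun e => e.1.1) hij)
  refine .of_nonneg_of_le (fun _ => abs_nonneg _) (fun i => ?_) ((hsq.add hRfin).div_const 2)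
  exact abs_mul_le_sq_mul_add_div_two _ (hr _ (G.mem_edgeSet.2 (hRadj i)))

lemma summable_dartSum_sq_mul_of_disjoint {A B : ℕ → V} (P : ∀ k, G.Walk (A k) (B k))
    (hP : ∀ k, (P k).IsPath)
    (hdisj : ∀ k l, k ≠ l → ∀ x, x ∈ (P k).support → x ∉ (P l).support) :
    Summable fun k => (P k).dartSum fun x y => f x y ^ 2 * r s(x, y) := by
  classical
  have hinj : Function.Injective fun d : Σ k, (P k).darts.toFinset =>
      (⟨d.2.1.toProd, d.2.1.adj⟩ : {e : V × V // G.Adj e.1 e.2}) := by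
    rintro ⟨k, d, hd⟩ ⟨l, d', hd'⟩ h
    obtain rfl : d = d' := Dart.ext _ _ (congrArg Subtype.val h)
    obtain rfl : k = l := by
      by_contra hkl
      exact hdisj k l hkl _ (dart_fst_mem_support_of_mem_darts _ (List.mem_toFinset.1 hd))
        (dart_fst_mem_support_of_mem_darts _ (List.mem_toFinset.1 hd'))
    rfl
  refine (hE.comp_injective hinj).sigma.congr fun k => ?_
  exact (Finset.tsum_subtype _ fun d : G.Dart => f d.fst d.snd ^ 2 * r d.edge).trans
    (List.sum_toFinset _ (darts_nodup_of_support_nodup (hP k).support_nodup))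

lemma tendsto_dartSum_mul_of_disjoint (hr : ∀ e ∈ G.edgeSet, 0 ≤ r e) {A B : ℕ → V}
    (P : ∀ k, G.Walk (A k) (B k)) (hP : ∀ k, (P k).IsPath)
    (hdisj : ∀ k l, k ≠ l → ∀ x, x ∈ (P k).support → x ∉ (P l).support)
    (hPfin : Summable fun k => ((P k).edges.map r).sum) :
    Tendsto (fun k => (P k).dartSum fun x y => f x y * r s(x, y)) atTop (𝓝 0) := by
  refine squeeze_zero_norm (fun k => abs_dartSum_mul_le hr (P k)) ?_
  exact ((summable_dartSum_sq_mul_of_disjoint hE P hP hdisj).add hPfin).div_const 2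
    |>.tendsto_atTop_zero

end Energy

theorem potential_well_defined_on_rays_general
    {V : Type} (G : SimpleGraph V)
    (r : Sym2 V → ℝ) (hr : ∀ e ∈ G.edgeSet, 0 < r e)
    (p q : V) (I : ℝ)
    (f : V → V → ℝ) (hf : IsFlow G p q I f)
    (hW : energy G r f < ⊤) (hK : CycleLaw G r f)
    (R : ℕ → V) (hRinj : Function.Injective R) (hR0 : R 0 = q)
    (hRadj : ∀ i : ℕ, G.Adj (R i) (R (i + 1)))
    (hRfin : Summable fun i : ℕ => r s(R i, R (i + 1))) :
    (Summable fun i : ℕ => |f (R i) (R (i + 1)) * r s(R i, R (i + 1))|) ∧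
    ∀ (S : ℕ → V), Function.Injective S → S 0 = q →
      (∀ i : ℕ, G.Adj (S i) (S (i + 1))) →
      (Summable fun i : ℕ => r s(S i, S (i + 1))) →
      ∀ (a b : ℕ → ℕ), StrictMono a → StrictMono b →
      ∀ (P : ∀ k : ℕ, G.Walk (R (a k)) (S (b k))),
        (∀ k, (P k).IsPath) →
        (∀ k l, k ≠ l → ∀ x, x ∈ (P k).support → x ∉ (P l).support) →
        (∀ k, ∀ x ∈ (P k).support,
          (x ∈ Set.range R → x = R (a k)) ∧ (x ∈ Set.range S → x = S (b k))) →
        (Summable fun k : ℕ => ((P k).edges.map r).sum) →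
        ∑' i : ℕ, f (R i) (R (i + 1)) * r s(R i, R (i + 1)) =
          ∑' i : ℕ, f (S i) (S (i + 1)) * r s(S i, S (i + 1)) := by
  have hr' : ∀ e ∈ G.edgeSet, 0 ≤ r e := fun e he => (hr e he).le
  have hE := summable_sq_mul_of_energy_lt_top hr' hW
  have hg : ∀ x y, f x y * r s(x, y) = -(f y x * r s(y, x)) := fun x y => by
    rw [hf.1 x y, Sym2.eq_swap]
    ring
  refine ⟨summable_abs_mul_of_ray hE hr' hRinj hRadj hRfin, ?_⟩
  intro S hSinj hS0 hSadj hSfin a b ha hb P hP hdisj _ hPfin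
  exact tsum_eq_of_linked hg (fun _ c => dartSum_eq_zero_of_closed hg hK c) hRadj hSadj
    (hR0.trans hS0.symm) (summable_abs_mul_of_ray hE hr' hRinj hRadj hRfin).of_abs
    (summable_abs_mul_of_ray hE hr' hSinj hSadj hSfin).of_abs ha.tendsto_atTop hb.tendsto_atTop P
    (tendsto_dartSum_mul_of_disjoint hE hr' P hP hdisj hPfin)

/-- Along any ray of finite total resistance starting at `q`, the potential
differences of a finite-energy flow satisfying Kirchhoff's cycle law are
absolutely summable, and the resulting sum does not depend on the ray,
provided the two rays are linked by disjoint paths of summable total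
resistance as in the statement. -/
theorem potential_well_defined_on_rays
    {V : Type} [Countable V] (G : SimpleGraph V) (hconn : G.Connected)
    (hlf : ∀ v : V, (G.neighborSet v).Finite)
    (r : Sym2 V → ℝ) (hr : ∀ e ∈ G.edgeSet, 0 < r e)
    (p q : V) (hpq : p ≠ q) (I : ℝ)
    (f : V → V → ℝ) (hf : IsFlow G p q I f)
    (hW : energy G r f < ⊤) (hK : CycleLaw G r f)
    (R : ℕ → V) (hRinj : Function.Injective R) (hR0 : R 0 = q)
    (hRadj : ∀ i : ℕ, G.Adj (R i) (R (i + 1)))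
    (hRfin : Summable fun i : ℕ => r s(R i, R (i + 1))) :
    (Summable fun i : ℕ => |f (R i) (R (i + 1)) * r s(R i, R (i + 1))|) ∧
    ∀ (S : ℕ → V), Function.Injective S → S 0 = q →
      (∀ i : ℕ, G.Adj (S i) (S (i + 1))) →
      (Summable fun i : ℕ => r s(S i, S (i + 1))) →
      ∀ (a b : ℕ → ℕ), StrictMono a → StrictMono b →
      ∀ (P : ∀ k : ℕ, G.Walk (R (a k)) (S (b k))),
        (∀ k, (P k).IsPath) →
        (∀ k l, k ≠ l → ∀ x, x ∈ (P k).support → x ∉ (P l).support) →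
        (∀ k, ∀ x ∈ (P k).support,
          (x ∈ Set.range R → x = R (a k)) ∧ (x ∈ Set.range S → x = S (b k))) →
        (Summable fun k : ℕ => ((P k).edges.map r).sum) →
        ∑' i : ℕ, f (R i) (R (i + 1)) * r s(R i, R (i + 1)) =
          ∑' i : ℕ, f (S i) (S (i + 1)) * r s(S i, S (i + 1)) :=
  potential_well_defined_on_rays_general G r hr p q I f hf hW hK R hRinj hR0 hRadj hRfin
end
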